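/- arXiv:2212.11954 — 5 statements merged into one kernel-verified Lean document; each statement's English description precedes it below -/
import Mathlib

section
/- Let P = (X, ≺) be a finite poset, t ∈ ℕ, and let x, y, z ∈ X be three distinct elements. For k, ℓ ≥ 0 let F(k,ℓ) be the number of order-preserving maps f : X → {0,…,t} with f(y) − f(x) = k and f(z) − f(y) = ℓ. Then F(k, ℓ+1)·F(k+1, ℓ) ≥ F(k, ℓ)·F(k+1, ℓ+1). -/
/-- `F(k,ℓ)`: the number of order-preserving maps `f : α → {0,…,t}` with
`f(y) − f(x) = k` and `f(z) − f(y) = ℓ` (i.e. `f y = f x + k` and `f z = f y + ℓ`). -/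
noncomputable def crossCount {α : Type*} [PartialOrder α] (t : ℕ) (x y z : α)
    (k ℓ : ℕ) : ℕ :=
  Nat.card {f : α → Fin (t + 1) //
    (∀ a b : α, a ≤ b → f a ≤ f b) ∧ (f y : ℕ) = (f x : ℕ) + k ∧
      (f z : ℕ) = (f y : ℕ) + ℓ}

/-!
Given `f` counted by `F(k, ℓ)` and `g` counted by `F(k+1, ℓ+1)`, shift `g` by the constant
`c = g y - f y` to a map `p` with `p y = f y`; then `p x = f x - 1` and `p z = f z + 1`.
Call `u ≤ v` linked when exchanging the values of `f` and `p` at only one of them breaks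
monotonicity. Exchanging `f` and `p` on a connected component of this relation keeps both maps
order-preserving and does not change the components. Exchanging on the component of `z` (where
`f < p`) and shifting back by `c` yields a pair counted by `F(k, ℓ+1) · F(k+1, ℓ)`; if this
leaves `{0, …, t}`, then `c < 0`, and exchanging on the component of `x` (where `p < f`) works
instead. The resulting map is its own left inverse, hence injective.
-/

namespace CrossProduct

open Set Classical

variable {α : Type*}

section Linked

variable [PartialOrder α]

/-- `u ≤ v`, and exchanging the values of `F` and `P` at exactly one of `u`, `v` would break
monotonicity. -/
def Clash (F P : α → ℤ) (u v : α) : Prop := u ≤ v ∧ (P v < F u ∨ F v < P u)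

def Linked (F P : α → ℤ) (u v : α) : Prop := Clash F P u v ∨ Clash F P v u

def block (F P : α → ℤ) (w : α) : Set α := {a | Relation.ReflTransGen (Linked F P) w a}

variable {F P : α → ℤ} {S : Set α} {u v w a b : α}

theorem linked_comm (F P : α → ℤ) : Linked P F = Linked F P := by
  ext u v
  simp only [Linked, Clash, or_comm]

theorem linked_add_const (F P : α → ℤ) (c : ℤ) :
    Linked (fun a => F a + c) (fun a => P a + c) = Linked F P := by
  ext u v
  simp only [Linked, Clash, add_lt_add_iff_right]

theorem block_eq_of_linked_eq {F' P' : α → ℤ} (h : Linked F' P' = Linked F P) :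
    block F' P' = block F P := by
  unfold block
  rw [h]

theorem mem_block_self : w ∈ block F P w := Relation.ReflTransGen.refl

theorem Linked.mem_block (ha : a ∈ block F P w) (h : Linked F P a b) : b ∈ block F P w :=
  Relation.ReflTransGen.tail ha h

theorem Linked.lt_of_lt (hF : Monotone F) (hP : Monotone P) (h : Linked F P u v)
    (hu : F u < P u) : F v < P v := by
  rcases h with ⟨huv, h⟩ | ⟨hvu, h⟩
  · have := hF huv; have := hP huv; omega
  · have := hF hvu; have := hP hvu; omega

theorem lt_of_mem_block (hF : Monotone F) (hP : Monotone P) (hw : F w < P w)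
    (ha : a ∈ block F P w) : F a < P a := by
  induction ha with
  | refl => exact hw
  | tail _ h ih => exact h.lt_of_lt hF hP ih

theorem monotone_piecewise_of_closed [DecidablePred (· ∈ S)] (hF : Monotone F)
    (hP : Monotone P) (hS : ∀ a ∈ S, ∀ b, Linked F P a b → b ∈ S) :
    Monotone (S.piecewise P F) := by
  intro a b hab
  by_cases ha : a ∈ S <;> by_cases hb : b ∈ S
  · simpa [ha, hb] using hP hab
  · have : ¬ Clash F P a b := fun h => hb (hS a ha b (Or.inl h))
    simp only [Clash, not_and, not_or, not_lt] at this
    simpa [ha, hb] using (this hab).2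
  · have : ¬ Clash F P a b := fun h => ha (hS b hb a (Or.inr h))
    simp only [Clash, not_and, not_or, not_lt] at this
    simpa [ha, hb] using (this hab).1
  · simpa [ha, hb] using hF hab

theorem linked_piecewise_of_closed [DecidablePred (· ∈ S)] (hF : Monotone F)
    (hP : Monotone P) (hS : ∀ a ∈ S, ∀ b, Linked F P a b → b ∈ S) :
    Linked (S.piecewise P F) (S.piecewise F P) = Linked F P := by
  have hclash : ∀ u v, Clash (S.piecewise P F) (S.piecewise F P) u v ↔ Clash F P u v := by
    intro u v
    refine and_congr_right fun huv => ?_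
    have := hF huv; have := hP huv
    by_cases hu : u ∈ S <;> by_cases hv : v ∈ S
    · simp only [piecewise_eq_of_mem _ _ _ hu, piecewise_eq_of_mem _ _ _ hv, or_comm]
    · have : ¬ Clash F P u v := fun h => hv (hS u hu v (Or.inl h))
      simp only [Clash, not_and] at this
      simp only [piecewise_eq_of_mem _ _ _ hu, piecewise_eq_of_notMem _ _ _ hv]
      have := this huv; omega
    · have : ¬ Clash F P u v := fun h => hu (hS v hv u (Or.inr h))
      simp only [Clash, not_and] at this
      simp only [piecewise_eq_of_notMem _ _ _ hu, piecewise_eq_of_mem _ _ _ hv]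
      have := this huv; omega
    · simp only [piecewise_eq_of_notMem _ _ _ hu, piecewise_eq_of_notMem _ _ _ hv]
  ext u v
  simp only [Linked, hclash]

end Linked

section Pair

abbrev Pair (α : Type*) := (α → ℤ) × (α → ℤ)

variable (y : α)

def gap (p : Pair α) : ℤ := p.2 y - p.1 y

def align (p : Pair α) : α → ℤ := fun a => p.2 a - gap y p

noncomputable def swapAt (S : Set α) (p : Pair α) : Pair α :=
  (S.piecewise (align y p) p.1, fun a => S.piecewise p.1 (align y p) a + gap y p)

/-- After `swapAt y S`, both maps still take values in `[0, t]` on `S`. -/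
def SwapFits (t : ℕ) (S : Set α) (p : Pair α) : Prop :=
  ∀ w ∈ S, align y p w ∈ Icc 0 (t : ℤ) ∧ p.1 w + gap y p ∈ Icc 0 (t : ℤ)

variable {y} {t : ℕ} {S T : Set α} {p : Pair α} {a : α}

theorem align_apply_self : align y p y = p.1 y := by
  simp [align, gap]

theorem swapAt_fst_of_mem (ha : a ∈ S) : (swapAt y S p).1 a = align y p a :=
  piecewise_eq_of_mem _ _ _ ha

theorem swapAt_fst_of_notMem (ha : a ∉ S) : (swapAt y S p).1 a = p.1 a :=
  piecewise_eq_of_notMem _ _ _ ha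

theorem swapAt_snd_of_mem (ha : a ∈ S) : (swapAt y S p).2 a = p.1 a + gap y p := by
  simp [swapAt, ha]

theorem swapAt_snd_of_notMem (ha : a ∉ S) : (swapAt y S p).2 a = p.2 a := by
  simp [swapAt, ha, align]

theorem gap_swapAt (hy : y ∉ S) : gap y (swapAt y S p) = gap y p := by
  simp only [gap, swapAt_fst_of_notMem hy, swapAt_snd_of_notMem hy]

theorem align_swapAt (hy : y ∉ S) : align y (swapAt y S p) = S.piecewise p.1 (align y p) := by
  ext a
  simp only [align, gap_swapAt hy]
  simp [swapAt]

theorem swapAt_swapAt (hy : y ∉ S) : swapAt y S (swapAt y S p) = p := by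
  ext a <;> by_cases ha : a ∈ S
  · simp [swapAt_fst_of_mem ha, align_swapAt hy, ha]
  · simp [swapAt_fst_of_notMem ha]
  · simp [swapAt_snd_of_mem ha, gap_swapAt hy, swapAt_fst_of_mem ha, align]
  · simp [swapAt_snd_of_notMem ha]

theorem swapAt_swap : swapAt y S p.swap = (swapAt y S p).swap := by
  ext a <;> by_cases ha : a ∈ S
  · simp only [Prod.fst_swap, Prod.snd_swap, swapAt_fst_of_mem ha, swapAt_snd_of_mem ha, align,
      gap]
    ring
  · simp [swapAt_fst_of_notMem ha, swapAt_snd_of_notMem ha]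
  · simp only [Prod.fst_swap, Prod.snd_swap, swapAt_fst_of_mem ha, swapAt_snd_of_mem ha, align,
      gap]
    ring
  · simp [swapAt_fst_of_notMem ha, swapAt_snd_of_notMem ha]

theorem swapFits_swap : SwapFits y t S p.swap ↔ SwapFits y t S p := by
  refine forall₂_congr fun w _ => ?_
  have h₁ : align y p.swap w = p.1 w + gap y p := by
    simp only [Prod.fst_swap, Prod.snd_swap, align, gap]
    ring
  have h₂ : p.swap.1 w + gap y p.swap = align y p w := by
    simp only [Prod.fst_swap, Prod.snd_swap, align, gap]
    ring
  rw [h₁, h₂, and_comm]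

theorem swapFits_swapAt_of_disjoint (hy : y ∉ T) (hST : Disjoint S T) :
    SwapFits y t S (swapAt y T p) ↔ SwapFits y t S p := by
  refine forall₂_congr fun w hw => ?_
  have hwT : w ∉ T := hST.notMem_of_mem_left hw
  rw [align_swapAt hy, piecewise_eq_of_notMem _ _ _ hwT, swapAt_fst_of_notMem hwT,
    gap_swapAt hy]

theorem swapFits_swapAt_self (hy : y ∉ S) (hF : ∀ a, p.1 a ∈ Icc 0 (t : ℤ))
    (hG : ∀ a, p.2 a ∈ Icc 0 (t : ℤ)) : SwapFits y t S (swapAt y S p) := by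
  intro w hw
  rw [align_swapAt hy, piecewise_eq_of_mem _ _ _ hw, swapAt_fst_of_mem hw, gap_swapAt hy]
  exact ⟨hF w, by simpa [align] using hG w⟩

theorem mem_Icc_swapAt (hF : ∀ a, p.1 a ∈ Icc 0 (t : ℤ)) (hG : ∀ a, p.2 a ∈ Icc 0 (t : ℤ))
    (hfit : SwapFits y t S p) (a : α) :
    (swapAt y S p).1 a ∈ Icc 0 (t : ℤ) ∧ (swapAt y S p).2 a ∈ Icc 0 (t : ℤ) := by
  by_cases ha : a ∈ S
  · rw [swapAt_fst_of_mem ha, swapAt_snd_of_mem ha]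
    exact hfit a ha
  · rw [swapAt_fst_of_notMem ha, swapAt_snd_of_notMem ha]
    exact ⟨hF a, hG a⟩

end Pair

section PairBlock

variable [PartialOrder α] (y : α)

def pairBlock (p : Pair α) : α → Set α := block p.1 (align y p)

variable {y} {p : Pair α}

theorem monotone_align (hG : Monotone p.2) : Monotone (align y p) :=
  fun _ _ hab => by simpa [align] using hG hab

theorem pairBlock_swap : pairBlock y p.swap = pairBlock y p := by
  have h₁ : p.swap.1 = fun a => align y p a + gap y p := by
    ext
    simp [align]
  have h₂ : align y p.swap = fun a => p.1 a + gap y p := by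
    ext
    simp only [Prod.fst_swap, Prod.snd_swap, align, gap]
    ring
  unfold pairBlock
  rw [h₁, h₂, block_eq_of_linked_eq (linked_add_const _ _ _),
    block_eq_of_linked_eq (linked_comm _ _)]

theorem monotone_swapAt (hF : Monotone p.1) (hG : Monotone p.2) (w : α) :
    Monotone (swapAt y (pairBlock y p w) p).1 ∧ Monotone (swapAt y (pairBlock y p w) p).2 := by
  have hP := monotone_align (y := y) hG
  have hclosed : ∀ a ∈ pairBlock y p w, ∀ b, Linked p.1 (align y p) a b → b ∈ pairBlock y p w :=
    fun _ ha _ h => h.mem_block ha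
  refine ⟨monotone_piecewise_of_closed hF hP hclosed, fun a b hab => ?_⟩
  have := monotone_piecewise_of_closed hP hF (by rwa [linked_comm]) hab
  simpa [swapAt] using this

theorem pairBlock_swapAt (hF : Monotone p.1) (hG : Monotone p.2) {w : α}
    (hy : y ∉ pairBlock y p w) : pairBlock y (swapAt y (pairBlock y p w) p) = pairBlock y p := by
  unfold pairBlock at hy ⊢
  rw [align_swapAt hy]
  exact block_eq_of_linked_eq <|
    linked_piecewise_of_closed hF (monotone_align hG) fun _ ha _ h => h.mem_block ha

end PairBlock

section CrossMaps

variable [PartialOrder α]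

structure IsCrossMap (t : ℕ) (x y z : α) (k l : ℤ) (F : α → ℤ) : Prop where
  monotone : Monotone F
  mem_Icc : ∀ a, F a ∈ Icc 0 (t : ℤ)
  apply_y : F y = F x + k
  apply_z : F z = F y + l

def crossMaps (t : ℕ) (x y z : α) (k l : ℤ) : Set (α → ℤ) := {F | IsCrossMap t x y z k l F}

noncomputable def exchange (t : ℕ) (x y z : α) (p : Pair α) : Pair α :=
  if SwapFits y t (pairBlock y p z) p then swapAt y (pairBlock y p z) p
  else (swapAt y (pairBlock y p x) p).swap

variable {t : ℕ} {x y z : α} {k l : ℤ} {F G : α → ℤ} {a : α}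

theorem align_apply_x (hF : IsCrossMap t x y z k l F) (hG : IsCrossMap t x y z (k + 1) (l + 1) G) :
    align y (F, G) x = F x - 1 := by
  have := hF.apply_y; have := hG.apply_y
  simp only [align, gap]
  omega

theorem align_apply_z (hF : IsCrossMap t x y z k l F) (hG : IsCrossMap t x y z (k + 1) (l + 1) G) :
    align y (F, G) z = F z + 1 := by
  have := hF.apply_z; have := hG.apply_z
  simp only [align, gap]
  omega

theorem lt_align_of_mem_pairBlock_z (hF : IsCrossMap t x y z k l F)
    (hG : IsCrossMap t x y z (k + 1) (l + 1) G) (ha : a ∈ pairBlock y (F, G) z) :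
    F a < align y (F, G) a :=
  lt_of_mem_block hF.monotone (monotone_align hG.monotone)
    (by rw [align_apply_z hF hG]; omega) ha

theorem align_lt_of_mem_pairBlock_x (hF : IsCrossMap t x y z k l F)
    (hG : IsCrossMap t x y z (k + 1) (l + 1) G) (ha : a ∈ pairBlock y (F, G) x) :
    align y (F, G) a < F a := by
  refine lt_of_mem_block (monotone_align hG.monotone) hF.monotone
    (by rw [align_apply_x hF hG]; omega) ?_
  rwa [block_eq_of_linked_eq (linked_comm _ _)]

theorem notMem_pairBlock_z (hF : IsCrossMap t x y z k l F)
    (hG : IsCrossMap t x y z (k + 1) (l + 1) G) (h : align y (F, G) a ≤ F a) :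
    a ∉ pairBlock y (F, G) z :=
  fun ha => (lt_align_of_mem_pairBlock_z hF hG ha).not_ge h

theorem notMem_pairBlock_x (hF : IsCrossMap t x y z k l F)
    (hG : IsCrossMap t x y z (k + 1) (l + 1) G) (h : F a ≤ align y (F, G) a) :
    a ∉ pairBlock y (F, G) x :=
  fun ha => (align_lt_of_mem_pairBlock_x hF hG ha).not_ge h

theorem disjoint_pairBlock_z_x (hF : IsCrossMap t x y z k l F)
    (hG : IsCrossMap t x y z (k + 1) (l + 1) G) :
    Disjoint (pairBlock y (F, G) z) (pairBlock y (F, G) x) :=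
  disjoint_left.2 fun _ hz hx =>
    (lt_align_of_mem_pairBlock_z hF hG hz).not_gt (align_lt_of_mem_pairBlock_x hF hG hx)

theorem swapFits_pairBlock_z_of_gap_nonneg (hF : IsCrossMap t x y z k l F)
    (hG : IsCrossMap t x y z (k + 1) (l + 1) G) (hc : 0 ≤ gap y (F, G)) :
    SwapFits y t (pairBlock y (F, G) z) (F, G) := by
  intro w hw
  have hlt := lt_align_of_mem_pairBlock_z hF hG hw
  have hFw := hF.mem_Icc w
  have hGw := hG.mem_Icc w
  simp only [align, gap, mem_Icc] at hlt hFw hGw hc ⊢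
  omega

theorem swapFits_pairBlock_x_of_gap_neg (hF : IsCrossMap t x y z k l F)
    (hG : IsCrossMap t x y z (k + 1) (l + 1) G) (hc : gap y (F, G) < 0) :
    SwapFits y t (pairBlock y (F, G) x) (F, G) := by
  intro w hw
  have hlt := align_lt_of_mem_pairBlock_x hF hG hw
  have hFw := hF.mem_Icc w
  have hGw := hG.mem_Icc w
  simp only [align, gap, mem_Icc] at hlt hFw hGw hc ⊢
  omega

theorem swapAt_pairBlock_z_mem (hF : IsCrossMap t x y z k l F)
    (hG : IsCrossMap t x y z (k + 1) (l + 1) G)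
    (hfit : SwapFits y t (pairBlock y (F, G) z) (F, G)) :
    swapAt y (pairBlock y (F, G) z) (F, G) ∈
      crossMaps t x y z k (l + 1) ×ˢ crossMaps t x y z (k + 1) l := by
  have hx := notMem_pairBlock_z hF hG (a := x) (by rw [align_apply_x hF hG]; omega)
  have hy := notMem_pairBlock_z hF hG (a := y) align_apply_self.le
  have hz : z ∈ pairBlock y (F, G) z := mem_block_self
  have hz' := align_apply_z hF hG
  obtain ⟨hmono₁, hmono₂⟩ := monotone_swapAt (y := y) (p := (F, G)) hF.monotone hG.monotone z
  have hIcc := mem_Icc_swapAt hF.mem_Icc hG.mem_Icc hfit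
  have := hF.apply_y; have := hF.apply_z; have := hG.apply_y; have := hG.apply_z
  refine ⟨⟨hmono₁, fun a => (hIcc a).1, ?_, ?_⟩, ⟨hmono₂, fun a => (hIcc a).2, ?_, ?_⟩⟩ <;>
    simp only [swapAt_fst_of_mem hz, swapAt_fst_of_notMem hx, swapAt_fst_of_notMem hy,
      swapAt_snd_of_mem hz, swapAt_snd_of_notMem hx, swapAt_snd_of_notMem hy, gap] at hz' ⊢ <;>
    omega

theorem swap_swapAt_pairBlock_x_mem (hF : IsCrossMap t x y z k l F)
    (hG : IsCrossMap t x y z (k + 1) (l + 1) G)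
    (hfit : ¬ SwapFits y t (pairBlock y (F, G) z) (F, G)) :
    (swapAt y (pairBlock y (F, G) x) (F, G)).swap ∈
      crossMaps t x y z k (l + 1) ×ˢ crossMaps t x y z (k + 1) l := by
  have hx : x ∈ pairBlock y (F, G) x := mem_block_self
  have hy := notMem_pairBlock_x hF hG (a := y) align_apply_self.ge
  have hz := notMem_pairBlock_x hF hG (a := z) (by rw [align_apply_z hF hG]; omega)
  have hx' := align_apply_x hF hG
  have hc : gap y (F, G) < 0 :=
    not_le.1 fun hc => hfit (swapFits_pairBlock_z_of_gap_nonneg hF hG hc)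
  obtain ⟨hmono₁, hmono₂⟩ := monotone_swapAt (y := y) (p := (F, G)) hF.monotone hG.monotone x
  have hIcc := mem_Icc_swapAt hF.mem_Icc hG.mem_Icc (swapFits_pairBlock_x_of_gap_neg hF hG hc)
  have := hF.apply_y; have := hF.apply_z; have := hG.apply_y; have := hG.apply_z
  refine ⟨⟨hmono₂, fun a => (hIcc a).2, ?_, ?_⟩, ⟨hmono₁, fun a => (hIcc a).1, ?_, ?_⟩⟩ <;>
    simp only [Prod.fst_swap, Prod.snd_swap, swapAt_fst_of_mem hx, swapAt_fst_of_notMem hy,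
      swapAt_fst_of_notMem hz, swapAt_snd_of_mem hx, swapAt_snd_of_notMem hy,
      swapAt_snd_of_notMem hz, gap] at hx' ⊢ <;>
    omega

theorem mapsTo_exchange :
    MapsTo (exchange t x y z) (crossMaps t x y z k l ×ˢ crossMaps t x y z (k + 1) (l + 1))
      (crossMaps t x y z k (l + 1) ×ˢ crossMaps t x y z (k + 1) l) := by
  rintro ⟨F, G⟩ ⟨hF, hG⟩
  unfold exchange
  split_ifs with hfit
  · exact swapAt_pairBlock_z_mem hF hG hfit
  · exact swap_swapAt_pairBlock_x_mem hF hG hfit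

theorem leftInvOn_exchange :
    LeftInvOn (exchange t x y z) (exchange t x y z)
      (crossMaps t x y z k l ×ˢ crossMaps t x y z (k + 1) (l + 1)) := by
  rintro ⟨F, G⟩ ⟨hF, hG⟩
  by_cases hfit : SwapFits y t (pairBlock y (F, G) z) (F, G)
  · have hy := notMem_pairBlock_z hF hG (a := y) align_apply_self.le
    have hblock := pairBlock_swapAt hF.monotone hG.monotone hy
    have hfit' := swapFits_swapAt_self (t := t) hy hF.mem_Icc hG.mem_Icc
    have h : exchange t x y z (F, G) = swapAt y (pairBlock y (F, G) z) (F, G) := if_pos hfit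
    rw [h, exchange, hblock, if_pos hfit', swapAt_swapAt hy]
  · have hy := notMem_pairBlock_x hF hG (a := y) align_apply_self.ge
    have hblock :
        pairBlock y (swapAt y (pairBlock y (F, G) x) (F, G)).swap = pairBlock y (F, G) := by
      rw [pairBlock_swap, pairBlock_swapAt hF.monotone hG.monotone hy]
    have hfit' :
        ¬ SwapFits y t (pairBlock y (F, G) z) (swapAt y (pairBlock y (F, G) x) (F, G)).swap := by
      rwa [swapFits_swap, swapFits_swapAt_of_disjoint hy (disjoint_pairBlock_z_x hF hG)]
    have h : exchange t x y z (F, G) = (swapAt y (pairBlock y (F, G) x) (F, G)).swap := if_neg hfit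
    rw [h, exchange, hblock, if_neg hfit', swapAt_swap, swapAt_swapAt hy, Prod.swap_swap]

end CrossMaps

section Counting

variable [PartialOrder α] (t : ℕ) (x y z : α)

def crossMapsEquiv (k l : ℕ) :
    {f : α → Fin (t + 1) // (∀ a b : α, a ≤ b → f a ≤ f b) ∧ (f y : ℕ) = (f x : ℕ) + k ∧
      (f z : ℕ) = (f y : ℕ) + l} ≃ crossMaps t x y z k l where
  toFun f := ⟨fun a => (f.1 a : ℕ), fun a b hab => by exact_mod_cast f.2.1 a b hab,
    fun a => ⟨by positivity, by exact_mod_cast Nat.le_of_lt_succ (f.1 a).isLt⟩,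
    by exact_mod_cast f.2.2.1, by exact_mod_cast f.2.2.2⟩
  invFun F := ⟨fun a => ⟨(F.1 a).toNat, by have := (F.2.mem_Icc a).2; omega⟩,
    fun a b hab => by have := F.2.monotone hab; simp only [Fin.mk_le_mk]; omega,
    by have := F.2.apply_y; have := (F.2.mem_Icc x).1; simp only; omega,
    by have := F.2.apply_z; have := (F.2.mem_Icc y).1; simp only; omega⟩
  left_inv f := by ext; simp
  right_inv F := by ext a; simpa using (F.2.mem_Icc a).1

theorem crossCount_eq_ncard (k l : ℕ) :
    crossCount t x y z k l = (crossMaps t x y z k l).ncard :=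
  Nat.card_congr (crossMapsEquiv t x y z k l)

theorem finite_crossMaps [Finite α] (k l : ℤ) : (crossMaps t x y z k l).Finite :=
  (Finite.pi' fun _ => finite_Icc 0 (t : ℤ)).subset fun _ hF => hF.mem_Icc

end Counting

end CrossProduct

theorem cross_product_P_partitions_general {α : Type*} [Fintype α] [PartialOrder α]
    (t : ℕ) (x y z : α) (k ℓ : ℕ) :
    crossCount t x y z k (ℓ + 1) * crossCount t x y z (k + 1) ℓ ≥
      crossCount t x y z k ℓ * crossCount t x y z (k + 1) (ℓ + 1) := by
  simp only [CrossProduct.crossCount_eq_ncard, ← Set.ncard_prod]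
  push_cast
  exact Set.ncard_le_ncard_of_injOn _ CrossProduct.mapsTo_exchange
    CrossProduct.leftInvOn_exchange.injOn
    ((CrossProduct.finite_crossMaps t x y z _ _).prod (CrossProduct.finite_crossMaps t x y z _ _))

/-- **Cross-product inequality for `P`-partitions.** -/
theorem cross_product_P_partitions {α : Type*} [Fintype α] [PartialOrder α]
    (t : ℕ) (x y z : α) (hxy : x ≠ y) (hyz : y ≠ z) (hxz : x ≠ z) (k ℓ : ℕ) :
    crossCount t x y z k (ℓ + 1) * crossCount t x y z (k + 1) ℓ ≥
      crossCount t x y z k ℓ * crossCount t x y z (k + 1) (ℓ + 1) :=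
  cross_product_P_partitions_general t x y z k ℓ
end

section
/- Let P = (X, ≺) be a finite poset with X = {x₁,…,x_n}, t ∈ ℕ, and distinct x, y, z ∈ X. For k, ℓ ≥ 0 define Λ_q(k,ℓ) := Σ_f q₁^{f(x₁)}⋯q_n^{f(x_n)}, summed over order-preserving f : X → {0,…,t} with f(y)−f(x) = k and f(z)−f(y) = ℓ. Then Λ_q(k,ℓ+1)·Λ_q(k+1,ℓ) − Λ_q(k,ℓ)·Λ_q(k+1,ℓ+1) has all nonnegative coefficients as a polynomial in q₁,…,q_n. -/
/-!
The coefficient of `q^d` in `Λ(k₁,ℓ₁) Λ(k₂,ℓ₂)` counts pairs `(f, g)` of `P`-partitions with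
`f + g = d`. Normalising `f` at `x` and adding one point for the bounds `0` and `t`, such pairs are
the integer solutions `F` of a system of difference constraints `F v - F u ≤ c u v` with `F x = 0`,
`F y = k₁`, `F z = k₁ + ℓ₁`; as `g = d - f` obeys constraints of the same shape, the system is
self-dual with respect to `d`. In both products of the theorem `k₁ + k₂ = 2k + 1` and
`ℓ₁ + ℓ₂ = 2ℓ + 1`, so the claim is that raising `F z` from `k + ℓ` to `k + ℓ + 1` does not decrease
the number of solutions.

This is proved by integer Fourier–Motzkin elimination. Eliminating a variable `m ∉ {x, y, z}`
writes the count as a sum over `j ≥ 0` of the counts for the systems `eliminate c m j`, whose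
solutions are those extending to at least `j + 1` values at `m`; self-duality survives elimination.
Once only `x, y, z` remain, `F ↦ F + 1_z` injects one solution set into the other: self-duality and
`d z - d y = 2ℓ + 1` leave room above `F z = k + ℓ`.
-/

open scoped Classical in
/-- `Λ_q(k,ℓ) = Σ_f Π_u q_u^{f(u)}`, summed over order-preserving maps
`f : α → {0,…,t}` with `f(y) − f(x) = k` and `f(z) − f(y) = ℓ`. -/
noncomputable def crossPoly {α : Type*} [Fintype α] [PartialOrder α]
    (t : ℕ) (x y z : α) (k ℓ : ℕ) : MvPolynomial α ℤ :=
  ∑ f ∈ Finset.univ.filter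
      (fun f : α → Fin (t + 1) =>
        (∀ a b : α, a ≤ b → f a ≤ f b) ∧ (f y : ℕ) = (f x : ℕ) + k ∧
          (f z : ℕ) = (f y : ℕ) + ℓ),
    ∏ u : α, MvPolynomial.X u ^ (f u : ℕ)

open Finset Function MvPolynomial
open scoped Classical

namespace CrossProduct

section Potentials

variable {β : Type*} {c : β → β → ℤ} {s : Finset β} {x m : β} {F : β → ℤ}

structure IsPotential (c : β → β → ℤ) (s : Finset β) (x : β) (F : β → ℤ) : Prop where
  eq_zero_of_notMem : ∀ v ∉ s, F v = 0
  apply_anchor : F x = 0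
  sub_le : ∀ u ∈ s, ∀ v ∈ s, F v - F u ≤ c u v

def eliminate (c : β → β → ℤ) (m : β) (j : ℤ) (u v : β) : ℤ :=
  min (c u v) (c u m + c m v - j)

theorem isPotential_eliminate_iff {j : ℤ} :
    IsPotential (eliminate c m j) s x F ↔
      IsPotential c s x F ∧ ∀ u ∈ s, ∀ v ∈ s, F v - c m v + j ≤ F u + c u m := by
  refine ⟨fun h => ⟨⟨h.1, h.2, fun u hu v hv => (le_min_iff.1 (h.3 u hu v hv)).1⟩,
    fun u hu v hv => ?_⟩, fun ⟨h, hj⟩ => ⟨h.1, h.2, fun u hu v hv => ?_⟩⟩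
  · linarith [(le_min_iff.1 (h.3 u hu v hv)).2]
  · exact le_min (h.3 u hu v hv) (by linarith [hj u hu v hv])

theorem IsPotential.erase (hF : IsPotential c s x F) (hmx : m ≠ x) :
    IsPotential c (s.erase m) x (update F m 0) where
  eq_zero_of_notMem v hv := by
    rcases eq_or_ne v m with rfl | hvm
    · simp
    · rw [update_of_ne hvm]
      exact hF.eq_zero_of_notMem v fun hvs => hv (mem_erase.2 ⟨hvm, hvs⟩)
  apply_anchor := by rw [update_of_ne hmx.symm, hF.apply_anchor]
  sub_le u hu v hv := by
    rw [update_of_ne (ne_of_mem_erase hu), update_of_ne (ne_of_mem_erase hv)]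
    exact hF.sub_le u (mem_of_mem_erase hu) v (mem_of_mem_erase hv)

theorem IsPotential.update (hF : IsPotential c (s.erase m) x F) (hm : m ∈ s) (hmx : m ≠ x)
    (hmm : 0 ≤ c m m) {w : ℤ} (hlo : ∀ u ∈ s.erase m, F u - c m u ≤ w)
    (hhi : ∀ u ∈ s.erase m, w ≤ F u + c u m) : IsPotential c s x (update F m w) where
  eq_zero_of_notMem v hv := by
    rw [update_of_ne (ne_of_mem_of_not_mem hm hv).symm]
    exact hF.eq_zero_of_notMem v fun h => hv (mem_of_mem_erase h)
  apply_anchor := by rw [update_of_ne hmx.symm, hF.apply_anchor]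
  sub_le u hu v hv := by
    rcases eq_or_ne u m with rfl | hum <;> rcases eq_or_ne v u with rfl | hvu
    · simpa using hmm
    · have hv' : v ∈ s.erase u := mem_erase.2 ⟨hvu, hv⟩
      rw [update_self, update_of_ne (ne_of_mem_erase hv')]
      linarith [hlo v hv']
    · simpa using hF.sub_le v (mem_erase.2 ⟨hum, hu⟩) v (mem_erase.2 ⟨hum, hu⟩)
    · rcases eq_or_ne v m with rfl | hvm
      · rw [update_self, update_of_ne hum]
        linarith [hhi u (mem_erase.2 ⟨hum, hu⟩)]
      · rw [update_of_ne hum, update_of_ne hvm]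
        exact hF.sub_le u (mem_erase.2 ⟨hum, hu⟩) v (mem_erase.2 ⟨hvm, hv⟩)

variable [Fintype β]

noncomputable def potentials (c : β → β → ℤ) (s : Finset β) (x : β) : Finset (β → ℤ) :=
  {F ∈ Icc (fun v => if v ∈ s then -c v x else 0) (fun v => if v ∈ s then c x v else 0) |
    IsPotential c s x F}

theorem mem_potentials (hx : x ∈ s) : F ∈ potentials c s x ↔ IsPotential c s x F := by
  refine ⟨fun h => (mem_filter.1 h).2,
    fun hF => mem_filter.2 ⟨mem_Icc.2 ⟨fun v => ?_, fun v => ?_⟩, hF⟩⟩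
  all_goals
    by_cases hv : v ∈ s
    · have := hF.sub_le v hv x hx
      have := hF.sub_le x hx v hv
      simp only [hv, if_true]
      linarith [hF.apply_anchor]
    · simp [hv, hF.eq_zero_of_notMem v hv]

theorem potentials_eq_empty (hm : m ∈ s) (hmm : c m m < 0) : potentials c s x = ∅ :=
  filter_false_of_mem fun F _ hF => by simpa using (hF.sub_le m hm m hm).trans_lt hmm

theorem card_filter_potentials_eq_sum (P : (β → ℤ) → Prop) [DecidablePred P]
    (hP : ∀ F w, P (update F m w) ↔ P F) (hx : x ∈ s) (hm : m ∈ s) (hmx : m ≠ x)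
    (hmm : 0 ≤ c m m) :
    #{F ∈ potentials c s x | P F} =
      ∑ j ∈ Icc 0 (c x m + c m x), #{F ∈ potentials (eliminate c m j) (s.erase m) x | P F} := by
  have hx' : x ∈ s.erase m := mem_erase.2 ⟨hmx.symm, hx⟩
  set lo : (β → ℤ) → ℤ := fun F => (s.erase m).sup' ⟨x, hx'⟩ fun u => F u - c m u
  have lo_update (F : β → ℤ) (w : ℤ) : lo (update F m w) = lo F :=
    sup'_congr _ rfl fun u hu => by rw [update_of_ne (ne_of_mem_erase hu)]
  rw [← card_sigma]
  symm
  -- `(j, F)` goes to the extension of `F` by the value `lo F + j` at `m`.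
  refine card_nbij' (fun p => update p.2 m (lo p.2 + p.1))
    (fun F => ⟨F m - lo F, update F m 0⟩) ?_ ?_ ?_ ?_
  · rintro ⟨j, F⟩ hjF
    simp only [mem_coe, mem_sigma, mem_Icc, mem_filter, mem_potentials hx',
      isPotential_eliminate_iff] at hjF
    obtain ⟨⟨hj, -⟩, ⟨hF, hgap⟩, hPF⟩ := hjF
    simp only [mem_coe, mem_filter, mem_potentials hx, hP]
    refine ⟨hF.update hm hmx hmm (fun u hu => ?_) (fun u hu => ?_), hPF⟩
    · linarith [le_sup' (fun u => F u - c m u) hu]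
    · have : lo F ≤ F u + c u m - j :=
        sup'_le _ _ fun v hv => by linarith [hgap u hu v hv]
      linarith
  · intro F hF
    simp only [mem_coe, mem_filter, mem_potentials hx] at hF
    obtain ⟨hF, hPF⟩ := hF
    simp only [mem_coe, mem_sigma, mem_Icc, mem_filter, mem_potentials hx',
      isPotential_eliminate_iff, hP]
    have hFx := hF.apply_anchor
    refine ⟨⟨?_, ?_⟩, ⟨hF.erase hmx, fun u hu v hv => ?_⟩, hPF⟩
    · exact sub_nonneg.2 <| sup'_le _ _ fun u hu => by
        linarith [hF.sub_le m hm u (mem_of_mem_erase hu)]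
    · linarith [le_sup' (fun u => F u - c m u) hx', hF.sub_le x hx m hm]
    · rw [update_of_ne (ne_of_mem_erase hu), update_of_ne (ne_of_mem_erase hv)]
      linarith [le_sup' (fun u => F u - c m u) hv, hF.sub_le u (mem_of_mem_erase hu) m hm]
  · rintro ⟨j, F⟩ hjF
    simp only [mem_coe, mem_sigma, mem_filter, mem_potentials hx'] at hjF
    have hFm : F m = 0 := hjF.2.1.eq_zero_of_notMem m (notMem_erase m s)
    simp only [update_self, lo_update, add_sub_cancel_left, update_idem, ← hFm, update_eq_self]
  · intro F _
    simp only [lo_update, add_sub_cancel, update_idem, update_eq_self]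

end Potentials

section SelfDual

variable {β : Type*} {c : β → β → ℤ} {d : β → ℤ}

/-- The constraints `F v - F u ≤ c u v` are invariant under the reflection `F ↦ d - F`. -/
def IsSelfDual (c : β → β → ℤ) (d : β → ℤ) : Prop :=
  ∀ u v, c u v - c v u = d v - d u

theorem IsSelfDual.eliminate (hc : IsSelfDual c d) (m : β) (j : ℤ) :
    IsSelfDual (eliminate c m j) d := fun u v => by
  have := hc u v
  have := hc u m
  have := hc m v
  simp only [CrossProduct.eliminate]
  omega

variable [Fintype β] {s : Finset β} {x y z : β} {k l : ℤ}

theorem card_filter_potentials_le_of_subset (hc : IsSelfDual c d) (hs : s ⊆ {x, y, z})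
    (hxs : x ∈ s) (hys : y ∈ s) (hzs : z ∈ s) (hdy : d y - d x = 2 * k + 1)
    (hdz : d z - d y = 2 * l + 1) :
    #{F ∈ potentials c s x | F y = k ∧ F z = k + l} ≤
      #{F ∈ potentials c s x | F y = k ∧ F z = k + l + 1} := by
  obtain rfl | hxz := eq_or_ne x z
  · refine (card_eq_zero.2 (filter_false_of_mem fun F hF hFyz => ?_)).trans_le (Nat.zero_le _)
    have := ((mem_potentials hxs).1 hF).apply_anchor
    omega
  have hyz : y ≠ z := by rintro rfl; omega
  refine card_le_card_of_injOn (fun F => update F z (F z + 1)) ?_ ?_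
  · intro F hF
    simp only [mem_coe, mem_filter, mem_potentials hxs] at hF ⊢
    obtain ⟨hF, hFy, hFz⟩ := hF
    refine ⟨⟨fun v hv => ?_, ?_, fun u hu v hv => ?_⟩, ?_, ?_⟩
    · rw [update_of_ne (ne_of_mem_of_not_mem hzs hv).symm, hF.eq_zero_of_notMem v hv]
    · rw [update_of_ne hxz, hF.apply_anchor]
    · have := hF.sub_le u hu v hv
      have := hF.sub_le z hzs x hxs
      have := hF.sub_le z hzs y hys
      have := hc x z
      have := hc y z
      have := hF.apply_anchor
      have hu' := hs hu
      have hv' := hs hv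
      simp only [mem_insert, mem_singleton] at hu' hv'
      rcases hu' with rfl | rfl | rfl <;> rcases hv' with rfl | rfl | rfl <;>
        simp only [update_self, update_of_ne, hxz, hyz, ne_eq, not_false_eq_true] <;> omega
    · rw [update_of_ne hyz, hFy]
    · rw [update_self, hFz]
  · intro F hF G hG hFG
    simp only [coe_filter] at hF hG
    funext v
    have := congrFun hFG v
    rcases eq_or_ne v z with rfl | hvz
    · rw [hF.2.2, hG.2.2]
    · simpa [hvz] using this

theorem card_filter_potentials_le (hdy : d y - d x = 2 * k + 1) (hdz : d z - d y = 2 * l + 1)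
    (hc : IsSelfDual c d) (hxs : x ∈ s) (hys : y ∈ s) (hzs : z ∈ s) :
    #{F ∈ potentials c s x | F y = k ∧ F z = k + l} ≤
      #{F ∈ potentials c s x | F y = k ∧ F z = k + l + 1} := by
  induction s using Finset.strongInduction generalizing c with
  | H s ih =>
  by_cases hs : s ⊆ {x, y, z}
  · exact card_filter_potentials_le_of_subset hc hs hxs hys hzs hdy hdz
  obtain ⟨m, hm, hmxyz⟩ := not_subset.1 hs
  simp only [mem_insert, mem_singleton, not_or] at hmxyz
  obtain ⟨hmx, hmy, hmz⟩ := hmxyz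
  obtain hmm | hmm := lt_or_ge (c m m) 0
  · simp [potentials_eq_empty hm hmm]
  have hP (b : ℤ) (F : β → ℤ) (w : ℤ) :
      (update F m w y = k ∧ update F m w z = b) ↔ (F y = k ∧ F z = b) := by
    rw [update_of_ne (Ne.symm hmy), update_of_ne (Ne.symm hmz)]
  rw [card_filter_potentials_eq_sum (fun F => F y = k ∧ F z = k + l) (hP _) hxs hm hmx hmm,
    card_filter_potentials_eq_sum (fun F => F y = k ∧ F z = k + l + 1) (hP _) hxs hm hmx hmm]
  exact sum_le_sum fun j _ => ih _ (erase_ssubset hm) (hc.eliminate m j)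
    (mem_erase.2 ⟨Ne.symm hmx, hxs⟩) (mem_erase.2 ⟨Ne.symm hmy, hys⟩)
    (mem_erase.2 ⟨Ne.symm hmz, hzs⟩)

end SelfDual

variable {α : Type*} [PartialOrder α] {t : ℕ} {x y z : α}

/-- A potential `F` anchored at `some x` encodes `f a = F (some a) - F none`: the costs say that
`0 ≤ f ≤ t` and `0 ≤ d - f ≤ t` (through `none`) and that `f` and `d - f` are order-preserving.
On incomparable pairs the cost `t + d b` is no constraint and makes `orderCost` self-dual. -/
noncomputable def orderCost (t : ℕ) (d : α →₀ ℕ) : Option α → Option α → ℤ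
  | none, none => 0
  | none, some b => min t (d b)
  | some a, none => min 0 (t - d a)
  | some a, some b => if a ≤ b then d b - d a else if b ≤ a then 0 else t + d b

theorem isSelfDual_orderCost (d : α →₀ ℕ) :
    IsSelfDual (orderCost t d) fun o => o.elim 0 fun a => d a := by
  rintro (_ | a) (_ | b) <;> simp only [orderCost, Option.elim]
  · omega
  · omega
  · by_cases hab : a ≤ b <;> by_cases hba : b ≤ a
    · obtain rfl := le_antisymm hab hba
      simp
    all_goals simp only [hab, hba, if_true, if_false]; ring

variable [Fintype α]

noncomputable def crossPartitions (t : ℕ) (x y z : α) (k l : ℕ) : Finset (α → Fin (t + 1)) :=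
  {f | (∀ a b : α, a ≤ b → f a ≤ f b) ∧ (f y : ℕ) = (f x : ℕ) + k ∧ (f z : ℕ) = (f y : ℕ) + l}

noncomputable def crossPairs (t : ℕ) (x y z : α) (d : α →₀ ℕ) (k₁ l₁ k₂ l₂ : ℕ) :
    Finset ((α → Fin (t + 1)) × (α → Fin (t + 1))) :=
  {p ∈ crossPartitions t x y z k₁ l₁ ×ˢ crossPartitions t x y z k₂ l₂ |
    ∀ u, (p.1 u : ℕ) + p.2 u = d u}

theorem coeff_crossPoly_mul (d : α →₀ ℕ) (k₁ l₁ k₂ l₂ : ℕ) :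
    coeff d (crossPoly t x y z k₁ l₁ * crossPoly t x y z k₂ l₂) =
      #(crossPairs t x y z d k₁ l₁ k₂ l₂) := by
  rw [crossPoly, crossPoly, sum_mul_sum, ← sum_product', coeff_sum, crossPairs]
  simp_rw [← prod_mul_distrib, ← pow_add, coeff_prod_X_pow]
  rw [← sum_boole]
  refine sum_congr rfl fun p _ => if_congr ?_ rfl rfl
  simp [Finsupp.ext_iff, eq_comm]

variable {d : α →₀ ℕ}

theorem isPotential_orderCost_iff {F : Option α → ℤ} :
    IsPotential (orderCost t d) univ (some x) F ↔ F (some x) = 0 ∧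
      (∀ a, F none ≤ F (some a) ∧ F (some a) ≤ F none + t ∧
        F (some a) ≤ F none + d a ∧ F none + d a ≤ F (some a) + t) ∧
      ∀ a b, a ≤ b → F (some a) ≤ F (some b) ∧ F (some b) - F (some a) ≤ d b - d a := by
  constructor
  · intro hF
    have hc (u v : Option α) := hF.sub_le u (mem_univ u) v (mem_univ v)
    refine ⟨hF.apply_anchor, fun a => ?_, fun a b hab => ?_⟩
    · have hlo := hc (some a) none
      have hhi := hc none (some a)
      simp only [orderCost] at hlo hhi
      omega
    · have hba := hc (some b) (some a)
      have hab' := hc (some a) (some b)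
      simp only [orderCost, hab, if_true] at hba hab'
      refine ⟨?_, hab'⟩
      by_cases h : b ≤ a
      · rw [le_antisymm hab h]
      · simp only [h, if_false] at hba
        omega
  · rintro ⟨hFx, hbd, hmono⟩
    refine ⟨by simp, hFx, ?_⟩
    rintro (_ | a) - (_ | b) - <;> simp only [orderCost]
    · simp
    · have := hbd b; omega
    · have := hbd a; omega
    · by_cases hab : a ≤ b
      · simp only [hab, if_true]
        exact (hmono a b hab).2
      by_cases hba : b ≤ a
      · simp only [hab, hba, if_true, if_false]
        linarith [(hmono b a hba).1]
      · have := hbd a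
        have := hbd b
        simp only [hab, hba, if_false]
        omega

theorem eq_add_of_mem_crossPairs {k₁ l₁ k₂ l₂ : ℕ} {p}
    (hp : p ∈ crossPairs t x y z d k₁ l₁ k₂ l₂) : d y = d x + k₁ + k₂ ∧ d z = d y + l₁ + l₂ := by
  simp only [crossPairs, crossPartitions, mem_filter, mem_product, mem_univ, true_and] at hp
  have := hp.2 x; have := hp.2 y; have := hp.2 z
  omega

def pairPotential (x : α) (f : α → Fin (t + 1)) : Option α → ℤ :=
  fun o => o.elim (-(f x : ℤ)) fun a => (f a : ℤ) - f x

theorem pairPotential_mem {k₁ l₁ k₂ l₂ : ℕ} {p} (hp : p ∈ crossPairs t x y z d k₁ l₁ k₂ l₂) :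
    pairPotential x p.1 ∈ {F ∈ potentials (orderCost t d) univ (some x) |
      F (some y) = (k₁ : ℤ) ∧ F (some z) = (k₁ : ℤ) + l₁} := by
  obtain ⟨f, g⟩ := p
  simp only [crossPairs, crossPartitions, mem_filter, mem_product, mem_univ, true_and] at hp
  obtain ⟨⟨⟨hf, hfy, hfz⟩, hg, -⟩, hfg⟩ := hp
  simp only [pairPotential, mem_filter, mem_potentials (mem_univ _), isPotential_orderCost_iff,
    Option.elim_some, Option.elim_none]
  refine ⟨⟨sub_self _, fun a => ?_, fun a b hab => ?_⟩, by omega, by omega⟩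
  · have := (f a).is_le; have := (g a).is_le; have := hfg a
    omega
  · have : (f a : ℕ) ≤ f b := hf a b hab
    have : (g a : ℕ) ≤ g b := hg a b hab
    have := hfg a; have := hfg b
    omega

theorem card_crossPairs_eq_card_potentials {k₁ l₁ k₂ l₂ : ℕ}
    (hdy : d y = d x + k₁ + k₂) (hdz : d z = d y + l₁ + l₂) :
    #(crossPairs t x y z d k₁ l₁ k₂ l₂) =
      #{F ∈ potentials (orderCost t d) univ (some x) |
        F (some y) = (k₁ : ℤ) ∧ F (some z) = (k₁ : ℤ) + l₁} := by
  refine card_bij (fun p _ => pairPotential x p.1) (fun p hp => pairPotential_mem hp) ?_ ?_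
  · rintro ⟨f, g⟩ hp ⟨f', g'⟩ hp' h
    simp only [crossPairs, mem_filter] at hp hp'
    have hx := congrFun h none
    have hf (a : α) : f a = f' a := by
      have := congrFun h (some a)
      simp only [pairPotential, Option.elim_some, Option.elim_none] at this hx
      omega
    have hg (a : α) : g a = g' a := by
      have := hp.2 a; have := hp'.2 a; have := hf a
      omega
    exact Prod.ext (funext hf) (funext hg)
  · intro F hF
    simp only [mem_filter, mem_potentials (mem_univ _), isPotential_orderCost_iff] at hF
    obtain ⟨⟨hFx, hbd, hmono⟩, hFy, hFz⟩ := hF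
    refine ⟨⟨fun a => ⟨(F (some a) - F none).toNat, by have := hbd a; omega⟩,
      fun a => ⟨(d a - (F (some a) - F none)).toNat, by have := hbd a; omega⟩⟩, ?_, ?_⟩
    · simp only [crossPairs, crossPartitions, mem_filter, mem_product, mem_univ, true_and,
        Fin.mk_le_mk]
      have := hbd x; have := hbd y; have := hbd z
      refine ⟨⟨⟨fun a b hab => ?_, by omega, by omega⟩, fun a b hab => ?_, by omega, by omega⟩,
        fun a => ?_⟩
      all_goals have := hbd a
      · have := hmono a b hab; omega
      · have := hmono a b hab; have := hbd b; omega
      · omega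
    · funext o
      have := hbd x
      cases o with
      | none => simp only [pairPotential, Option.elim_none]; omega
      | some a => have := hbd a; simp only [pairPotential, Option.elim_some]; omega

end CrossProduct

open CrossProduct

theorem multivariate_cross_product_general {α : Type*} [Fintype α] [PartialOrder α]
    (t : ℕ) (x y z : α) (k ℓ : ℕ) :
    ∀ d : α →₀ ℕ,
      0 ≤ MvPolynomial.coeff d
        (crossPoly t x y z k (ℓ + 1) * crossPoly t x y z (k + 1) ℓ
          - crossPoly t x y z k ℓ * crossPoly t x y z (k + 1) (ℓ + 1)) := by
  intro d
  rw [coeff_sub, coeff_crossPoly_mul, coeff_crossPoly_mul, sub_nonneg, Nat.cast_le]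
  obtain h | ⟨p, hp⟩ := (crossPairs t x y z d k ℓ (k + 1) (ℓ + 1)).eq_empty_or_nonempty
  · simp [h]
  obtain ⟨hdy, hdz⟩ := eq_add_of_mem_crossPairs hp
  rw [card_crossPairs_eq_card_potentials hdy hdz,
    card_crossPairs_eq_card_potentials (by omega) (by omega)]
  push_cast
  exact card_filter_potentials_le (d := fun o => o.elim 0 fun a => d a)
    (by simp; omega) (by simp; omega) (isSelfDual_orderCost d)
    (mem_univ _) (mem_univ _) (mem_univ _)

/-- **Multivariate cross-product inequality for `P`-partitions.** -/
theorem multivariate_cross_product {α : Type*} [Fintype α] [PartialOrder α]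
    (t : ℕ) (x y z : α) (hxy : x ≠ y) (hyz : y ≠ z) (hxz : x ≠ z) (k ℓ : ℕ) :
    ∀ d : α →₀ ℕ,
      0 ≤ MvPolynomial.coeff d
        (crossPoly t x y z k (ℓ + 1) * crossPoly t x y z (k + 1) ℓ
          - crossPoly t x y z k ℓ * crossPoly t x y z (k + 1) (ℓ + 1)) :=
  multivariate_cross_product_general t x y z k ℓ
end

section
/- Let μ and ν be integer partitions (Young diagrams). Then f̂(μ∨ν)·f̂(μ∧ν) ≥ f̂(μ)·f̂(ν), where μ∨ν and μ∧ν are the componentwise maximum (union) and minimum (intersection) of the Young diagrams, f(λ) is the number of standard Young tableaux of shape λ, and f̂(λ) := f(λ)/|λ|!. -/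
/-- The number of standard Young tableaux on a set `c` of cells: bijections from `c` to
`{1,…,|c|}` that increase along rows and columns (i.e. strictly increase with the
componentwise order on cells). -/
noncomputable def sytCard (c : Finset (ℕ × ℕ)) : ℕ :=
  Nat.card {f : {x // x ∈ c} ≃ Fin c.card //
    ∀ a b : {x // x ∈ c}, (a : ℕ × ℕ).1 ≤ (b : ℕ × ℕ).1 → (a : ℕ × ℕ).2 ≤ (b : ℕ × ℕ).2 →
      a ≠ b → f a < f b}

/-- `f̂(μ) = f(μ)/|μ|!`. -/
noncomputable def fHat (c : Finset (ℕ × ℕ)) : ℝ := (sytCard c : ℝ) / c.card.factorial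

/-!
Write `e(s)` for the number of linear extensions of a finite poset `s`, and let `N = |A| + |B|`.
The labellings of the disjoint sum `A ⊕ B` by `{0, …, N-1}` are the shuffles of a labelling of
`A` with one of `B`, so there are `C(N, |A|) e(A) e(B) = N! f̂(A) f̂(B)` of them; as
`|A ∪ B| + |A ∩ B| = N`, it suffices to inject the labellings of `A ⊕ B` into those of
`(A ∪ B) ⊕ (A ∩ B)`. Each cell of `A ∩ B` carries two labels on either side, so it is enough to
decide, cell by cell, which of them goes to `A ∪ B`. Giving `A ∪ B` the smaller one yields a labelling because `A` and `B`
are lower sets, but this loses information. Call a set `F ⊆ A ∩ B` an admissible swap of `ℓ` if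
exchanging the two labels on `F` gives again a labelling of `A ⊕ B`. Undoing the min/max choice on
every cell of an admissible swap (one swap at a time) still yields a labelling, and now the map is
injective: two labellings with the same image differ by exchanging on a set `E` which is an
admissible swap of both, while `E` lies inside the union of their exchanged cells, which avoid all
admissible swaps.
-/

open Finset Sum
open scoped Nat

section Labelling
variable {β : Type*} [Preorder β] {s : Finset β} {U : Finset ℕ}

/-- An increasing bijection `s → U`, extended by `0` outside `s` so that it is determined by its
values on `s`. -/
structure IsLabelling (s : Finset β) (U : Finset ℕ) (ℓ : β → ℕ) : Prop where
  strictMonoOn : StrictMonoOn ℓ s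
  injOn : Set.InjOn ℓ s
  image_eq : s.image ℓ = U
  eq_zero : ∀ b ∉ s, ℓ b = 0

noncomputable def numLinearExtensions (s : Finset β) : ℕ :=
  Nat.card {f : s ≃ Fin s.card // StrictMono f}

theorem IsLabelling.mem {ℓ : β → ℕ} (h : IsLabelling s U ℓ) {b : β} (hb : b ∈ s) : ℓ b ∈ U :=
  h.image_eq ▸ mem_image_of_mem ℓ hb

noncomputable def IsLabelling.toLinearExtension (hU : U.card = s.card) {ℓ : β → ℕ}
    (h : IsLabelling s U ℓ) : s ≃ Fin s.card :=
  Equiv.ofBijective (fun b => (U.orderIsoOfFin hU).symm ⟨ℓ b, h.mem b.2⟩) <| by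
    refine (Fintype.bijective_iff_injective_and_card _).2 ⟨fun a b hab => ?_, by simp⟩
    simpa using Subtype.ext (h.injOn a.2 b.2 (by simpa using hab))

open Classical in
noncomputable def isLabellingEquiv (hU : U.card = s.card) :
    {ℓ // IsLabelling s U ℓ} ≃ {f : s ≃ Fin s.card // StrictMono f} where
  toFun ℓ := ⟨ℓ.2.toLinearExtension hU, fun a b hab => by
    simpa [IsLabelling.toLinearExtension] using ℓ.2.strictMonoOn a.2 b.2 hab⟩
  invFun f := ⟨fun b => if hb : b ∈ s then U.orderIsoOfFin hU (f.1 ⟨b, hb⟩) else 0,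
    { strictMonoOn := fun a ha b hb hab => by
        rw [mem_coe] at ha hb
        simpa [ha, hb] using f.2 (show (⟨a, ha⟩ : s) < ⟨b, hb⟩ from hab)
      injOn := fun a ha b hb hab => by
        rw [mem_coe] at ha hb
        simpa [ha, hb] using hab
      image_eq := by
        ext v
        refine ⟨fun hv => ?_, fun hv => ?_⟩
        · obtain ⟨b, hb, rfl⟩ := mem_image.1 hv
          simp [hb]
        · refine mem_image.2 ⟨f.1.symm ((U.orderIsoOfFin hU).symm ⟨v, hv⟩), coe_mem _, ?_⟩
          simp
      eq_zero := fun b hb => dif_neg hb }⟩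
  left_inv ℓ := by
    ext b
    by_cases hb : b ∈ s
    · simp [hb, IsLabelling.toLinearExtension]
    · simp [hb, ℓ.2.eq_zero b hb]
  right_inv f := by
    ext b
    simp only [IsLabelling.toLinearExtension, Equiv.ofBijective_apply, coe_mem, dif_pos,
      Subtype.coe_eta, OrderIso.symm_apply_apply]

theorem card_isLabelling (hU : U.card = s.card) :
    Nat.card {ℓ // IsLabelling s U ℓ} = numLinearExtensions s :=
  Nat.card_congr (isLabellingEquiv hU)

theorem finite_isLabelling (hU : U.card = s.card) : Finite {ℓ // IsLabelling s U ℓ} :=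
  Finite.of_equiv _ (isLabellingEquiv hU).symm

theorem IsLabelling.comp_equiv {β' : Type*} [Preorder β'] {t : Finset β'} {ℓ : β' → ℕ}
    (h : IsLabelling t U ℓ) (σ : β ≃ β') (hσ : ∀ b, σ b ∈ t ↔ b ∈ s)
    (hmono : StrictMonoOn (ℓ ∘ σ) s) : IsLabelling s U (ℓ ∘ σ) where
  strictMonoOn := hmono
  injOn a ha b hb hab := σ.injective (h.injOn ((hσ a).2 ha) ((hσ b).2 hb) hab)
  image_eq := by
    classical
    rw [← h.image_eq, ← image_image]
    congr
    ext w
    exact ⟨fun hw => by obtain ⟨b, hb, rfl⟩ := mem_image.1 hw; exact (hσ b).2 hb,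
      fun hw => mem_image.2 ⟨σ.symm w, (hσ _).1 (by simpa using hw), by simp⟩⟩
  eq_zero b hb := h.eq_zero _ (mt (hσ b).1 hb)

end Labelling

section DisjSum
variable {α γ δ : Type*} {X : Finset α} {Y : Finset γ}

theorem strictMonoOn_disjSum_iff [Preorder α] [Preorder γ] [Preorder δ] {f : α ⊕ γ → δ} :
    StrictMonoOn f (X.disjSum Y) ↔ StrictMonoOn (f ∘ inl) X ∧ StrictMonoOn (f ∘ inr) Y := by
  refine ⟨fun h => ⟨fun a ha b hb hab => h (by simpa using ha) (by simpa using hb)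
    (inl_lt_inl_iff.2 hab), fun a ha b hb hab => h (by simpa using ha) (by simpa using hb)
    (inr_lt_inr_iff.2 hab)⟩, fun ⟨hX, hY⟩ => ?_⟩
  rintro (a | a) ha (b | b) hb hab
  · exact hX (by simpa using ha) (by simpa using hb) (inl_lt_inl_iff.1 hab)
  · exact absurd hab not_inl_lt_inr
  · exact absurd hab not_inr_lt_inl
  · exact hY (by simpa using ha) (by simpa using hb) (inr_lt_inr_iff.1 hab)

variable [DecidableEq δ]

theorem image_disjSum (f : α ⊕ γ → δ) :
    (X.disjSum Y).image f = X.image (f ∘ inl) ∪ Y.image (f ∘ inr) := by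
  ext v
  simp [Sum.exists]

theorem injOn_disjSum_iff {f : α ⊕ γ → δ} :
    Set.InjOn f (X.disjSum Y) ↔ Set.InjOn (f ∘ inl) X ∧ Set.InjOn (f ∘ inr) Y ∧
      Disjoint (X.image (f ∘ inl)) (Y.image (f ∘ inr)) := by
  refine ⟨fun h => ⟨fun a ha b hb hab =>
    inl_injective (h (by simpa using ha) (by simpa using hb) hab), fun a ha b hb hab =>
    inr_injective (h (by simpa using ha) (by simpa using hb) hab), ?_⟩, fun ⟨hX, hY, hXY⟩ => ?_⟩
  · simp only [disjoint_left, mem_image, not_exists, not_and]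
    rintro _ ⟨a, ha, rfl⟩ c hc hac
    exact inr_ne_inl (h (by simpa using hc) (by simpa using ha) hac)
  · rintro (a | a) ha (b | b) hb hab <;>
      simp only [mem_coe, inl_mem_disjSum, inr_mem_disjSum] at ha hb
    · exact congrArg inl (hX ha hb hab)
    · exact (disjoint_left.1 hXY (mem_image_of_mem _ ha) (mem_image.2 ⟨b, hb, hab.symm⟩)).elim
    · exact (disjoint_left.1 hXY (mem_image_of_mem _ hb) (mem_image.2 ⟨a, ha, hab⟩)).elim
    · exact congrArg inr (hY ha hb hab)

theorem isLabelling_disjSum_iff [Preorder α] [Preorder γ] {ℓ : α ⊕ γ → ℕ} {U V : Finset ℕ}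
    (hV : V ⊆ U) :
    IsLabelling (X.disjSum Y) U ℓ ∧ X.image (ℓ ∘ inl) = V ↔
      IsLabelling X V (ℓ ∘ inl) ∧ IsLabelling Y (U \ V) (ℓ ∘ inr) := by
  constructor
  · rintro ⟨⟨hmono, hinj, himage, hzero⟩, rfl⟩
    rw [strictMonoOn_disjSum_iff] at hmono
    rw [injOn_disjSum_iff] at hinj
    rw [image_disjSum] at himage
    refine ⟨⟨hmono.1, hinj.1, rfl, fun a ha => hzero _ (by simpa)⟩,
      ⟨hmono.2, hinj.2.1, ?_, fun c hc => hzero _ (by simpa)⟩⟩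
    rw [← himage, union_sdiff_cancel_left hinj.2.2]
  · rintro ⟨⟨hmX, hiX, himX, hzX⟩, ⟨hmY, hiY, himY, hzY⟩⟩
    refine ⟨⟨strictMonoOn_disjSum_iff.2 ⟨hmX, hmY⟩,
      injOn_disjSum_iff.2 ⟨hiX, hiY, himX ▸ himY ▸ disjoint_sdiff⟩,
      by rw [image_disjSum, himX, himY, union_sdiff_of_subset hV], ?_⟩, himX⟩
    rintro (a | c) h
    · exact hzX a (by simpa using h)
    · exact hzY c (by simpa using h)

theorem card_isLabelling_disjSum [Preorder α] [Preorder γ] {U : Finset ℕ}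
    (hU : U.card = X.card + Y.card) :
    Nat.card {ℓ // IsLabelling (X.disjSum Y) U ℓ} =
      U.card.choose X.card * (numLinearExtensions X * numLinearExtensions Y) := by
  have hπ (ℓ : {ℓ // IsLabelling (X.disjSum Y) U ℓ}) :
      X.image (ℓ.1 ∘ inl) ∈ U.powersetCard X.card := by
    refine mem_powersetCard.2 ⟨?_, card_image_of_injOn (injOn_disjSum_iff.1 ℓ.2.injOn).1⟩
    obtain ⟨ℓ, hℓ⟩ := ℓ
    calc X.image (ℓ ∘ inl) ⊆ X.image (ℓ ∘ inl) ∪ Y.image (ℓ ∘ inr) := subset_union_left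
      _ = U := by rw [← image_disjSum, hℓ.image_eq]
  have hfiber (V : U.powersetCard X.card) :
      Nat.card {ℓ // (⟨_, hπ ℓ⟩ : U.powersetCard X.card) = V} =
        numLinearExtensions X * numLinearExtensions Y := by
    obtain ⟨V, hV⟩ := V
    obtain ⟨hVU, hVX⟩ := mem_powersetCard.1 hV
    rw [← card_isLabelling hVX, ← card_isLabelling (by rw [card_sdiff_of_subset hVU]; omega),
      ← Nat.card_prod]
    refine Nat.card_congr
      { toFun := fun ℓ =>
          have h := (isLabelling_disjSum_iff hVU).1 ⟨ℓ.1.2, congrArg Subtype.val ℓ.2⟩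
          (⟨_, h.1⟩, ⟨_, h.2⟩)
        invFun := fun xy =>
          have h := (isLabelling_disjSum_iff (ℓ := Sum.elim xy.1.1 xy.2.1) hVU).2 ⟨xy.1.2, xy.2.2⟩
          ⟨⟨_, h.1⟩, Subtype.ext h.2⟩
        left_inv := fun ℓ => by ext z; cases z <;> rfl
        right_inv := fun xy => rfl }
  have : Finite {ℓ // IsLabelling (X.disjSum Y) U ℓ} := finite_isLabelling (by simp [hU])
  rw [← Nat.card_congr (Equiv.sigmaFiberEquiv fun ℓ => (⟨_, hπ ℓ⟩ : U.powersetCard X.card)),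
    Nat.card_sigma, sum_congr rfl fun V _ => hfiber V, sum_const, Finset.card_univ,
    Fintype.card_coe, card_powersetCard, smul_eq_mul]

end DisjSum

section Swap
variable {α : Type*} [DecidableEq α]

def swapOn (T : Finset α) : Equiv.Perm (α ⊕ α) :=
  Function.Involutive.toPerm
    (Sum.elim (fun p => if p ∈ T then inr p else inl p) fun p => if p ∈ T then inl p else inr p)
    (by rintro (p | p) <;> by_cases hp : p ∈ T <;> simp [hp])

@[simp] theorem swapOn_inl (T : Finset α) (p : α) :
    swapOn T (inl p) = if p ∈ T then inr p else inl p := rfl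

@[simp] theorem swapOn_inr (T : Finset α) (p : α) :
    swapOn T (inr p) = if p ∈ T then inl p else inr p := rfl

@[simp] theorem swapOn_empty (z : α ⊕ α) : swapOn ∅ z = z := by
  cases z <;> simp

@[simp] theorem swapOn_swapOn (S T : Finset α) (z : α ⊕ α) :
    swapOn S (swapOn T z) = swapOn (symmDiff S T) z := by
  cases z <;> simp only [swapOn_inl, swapOn_inr, mem_symmDiff] <;> grind [swapOn_inl, swapOn_inr]

theorem swapOn_mem_disjSum_iff {A B S : Finset α} (hS : S ⊆ A ∩ B) (z : α ⊕ α) :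
    swapOn S (swapOn (B \ A) z) ∈ A.disjSum B ↔ z ∈ (A ∪ B).disjSum (A ∩ B) := by
  cases z <;> simp only [swapOn_inl, swapOn_inr, apply_ite (swapOn _)] <;>
    split_ifs <;> simp_all [subset_iff]

end Swap

section Bjorner
variable {α : Type*} [Preorder α] [DecidableEq α] {A B : Finset α} {ℓ : α ⊕ α → ℕ}
  {U : Finset ℕ}

/-- After regrouping by `swapOn (B \ A)`, the first copy carries the smaller and the second copy
the larger of the two labels of each cell of `A ∩ B`. -/
theorem strictMonoOn_swapOn_minMax (hA : IsLowerSet (A : Set α)) (hB : IsLowerSet (B : Set α))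
    (hmono : StrictMonoOn ℓ (A.disjSum B)) (hinj : Set.InjOn ℓ (A.disjSum B)) :
    StrictMonoOn (ℓ ∘ swapOn ((A ∩ B).filter fun p => ℓ (inr p) < ℓ (inl p)) ∘ swapOn (B \ A))
      ((A ∪ B).disjSum (A ∩ B)) := by
  have hne (p) (hpA : p ∈ A) (hpB : p ∈ B) : ℓ (inl p) ≠ ℓ (inr p) := fun h =>
    inl_ne_inr (hinj (by simpa using hpA) (by simpa using hpB) h)
  rw [strictMonoOn_disjSum_iff] at hmono ⊢
  simp only [StrictMonoOn, Function.comp_apply, swapOn_inl, swapOn_inr, apply_ite ℓ,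
    apply_ite (swapOn _), coe_union, coe_inter, Set.mem_union, Set.mem_inter_iff, mem_coe,
    mem_sdiff, mem_filter, mem_inter] at hmono ⊢
  refine ⟨fun p hp q hq hpq => ?_, fun p hp q hq hpq => ?_⟩ <;>
  · have := hA hpq.le; have := hB hpq.le
    grind

theorem strictMonoOn_swapOn_sdiff (hA : IsLowerSet (A : Set α)) (hB : IsLowerSet (B : Set α))
    {Z F : Finset α} (hZ : Z ⊆ A ∩ B) (hF : F ⊆ A ∩ B)
    (hℓ : StrictMonoOn ℓ (A.disjSum B)) (hFℓ : StrictMonoOn (ℓ ∘ swapOn F) (A.disjSum B))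
    (hZℓ : StrictMonoOn (ℓ ∘ swapOn Z ∘ swapOn (B \ A)) ((A ∪ B).disjSum (A ∩ B))) :
    StrictMonoOn (ℓ ∘ swapOn (Z \ F) ∘ swapOn (B \ A)) ((A ∪ B).disjSum (A ∩ B)) := by
  -- For `p < q`, the inequality to prove is one given by `hZℓ` if neither of `p, q` lies in `F`,
  -- by `hℓ` if both do, and by `hFℓ` if exactly one does.
  rw [strictMonoOn_disjSum_iff] at hℓ hFℓ hZℓ ⊢
  simp only [StrictMonoOn, Function.comp_apply, swapOn_inl, swapOn_inr,
    apply_ite ℓ, apply_ite (swapOn _), coe_union, coe_inter, Set.mem_union, Set.mem_inter_iff,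
    mem_coe, mem_sdiff, subset_iff, mem_inter] at hZ hF hℓ hFℓ hZℓ ⊢
  refine ⟨fun p hp q hq hpq => ?_, fun p hp q hq hpq => ?_⟩ <;>
  · have := hA hpq.le; have := hB hpq.le
    grind

open Classical in
noncomputable def admissibleSwaps (A B : Finset α) (ℓ : α ⊕ α → ℕ) : Finset (Finset α) :=
  (A ∩ B).powerset.filter fun F => StrictMonoOn (ℓ ∘ swapOn F) (A.disjSum B)

theorem mem_admissibleSwaps {F : Finset α} :
    F ∈ admissibleSwaps A B ℓ ↔ F ⊆ A ∩ B ∧ StrictMonoOn (ℓ ∘ swapOn F) (A.disjSum B) := by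
  simp only [admissibleSwaps, mem_filter, mem_powerset]

noncomputable def exchangedCells (A B : Finset α) (ℓ : α ⊕ α → ℕ) : Finset α :=
  (A ∩ B).filter (fun p => ℓ (inr p) < ℓ (inl p)) \ (admissibleSwaps A B ℓ).sup id

theorem exchangedCells_subset : exchangedCells A B ℓ ⊆ A ∩ B :=
  sdiff_subset.trans (filter_subset _ _)

theorem disjoint_exchangedCells {F : Finset α} (hF : F ∈ admissibleSwaps A B ℓ) :
    Disjoint F (exchangedCells A B ℓ) :=
  disjoint_sdiff.mono_left (le_sup (f := id) hF)

theorem strictMonoOn_exchangedCells (hA : IsLowerSet (A : Set α)) (hB : IsLowerSet (B : Set α))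
    (hℓ : IsLabelling (A.disjSum B) U ℓ) :
    StrictMonoOn (ℓ ∘ swapOn (exchangedCells A B ℓ) ∘ swapOn (B \ A))
      ((A ∪ B).disjSum (A ∩ B)) := by
  suffices ∀ 𝓕 ⊆ admissibleSwaps A B ℓ, StrictMonoOn (ℓ ∘ swapOn ((A ∩ B).filter
      (fun p => ℓ (inr p) < ℓ (inl p)) \ 𝓕.sup id) ∘ swapOn (B \ A)) ((A ∪ B).disjSum (A ∩ B)) from
    this _ subset_rfl
  intro 𝓕 h𝓕
  induction 𝓕 using Finset.induction_on with
  | empty => simpa using strictMonoOn_swapOn_minMax hA hB hℓ.strictMonoOn hℓ.injOn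
  | insert F 𝓕 _ ih =>
    obtain ⟨hFC, hFℓ⟩ := mem_admissibleSwaps.1 (h𝓕 (mem_insert_self F 𝓕))
    rw [sup_insert, id, sup_comm, ← sdiff_sdiff_left]
    exact strictMonoOn_swapOn_sdiff hA hB (sdiff_subset.trans (filter_subset _ _)) hFC
      hℓ.strictMonoOn hFℓ (ih ((subset_insert F 𝓕).trans h𝓕))

/-- `swapOn (B \ A)` moves the cells of `B \ A` to the first copy, turning `A ⊕ B` into
`(A ∪ B) ⊕ (A ∩ B)`. -/
noncomputable def supInfLabelling (A B : Finset α) (ℓ : α ⊕ α → ℕ) : α ⊕ α → ℕ :=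
  ℓ ∘ swapOn (exchangedCells A B ℓ) ∘ swapOn (B \ A)

theorem isLabelling_supInfLabelling (hA : IsLowerSet (A : Set α)) (hB : IsLowerSet (B : Set α))
    (hℓ : IsLabelling (A.disjSum B) U ℓ) :
    IsLabelling ((A ∪ B).disjSum (A ∩ B)) U (supInfLabelling A B ℓ) :=
  hℓ.comp_equiv ((swapOn (B \ A)).trans (swapOn (exchangedCells A B ℓ)))
    (swapOn_mem_disjSum_iff exchangedCells_subset) (strictMonoOn_exchangedCells hA hB hℓ)

theorem supInfLabelling_injOn :
    Set.InjOn (supInfLabelling A B) {ℓ | IsLabelling (A.disjSum B) U ℓ} := by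
  intro ℓ₁ h₁ ℓ₂ h₂ h
  set E := symmDiff (exchangedCells A B ℓ₁) (exchangedCells A B ℓ₂)
  have h₂₁ : ℓ₂ = ℓ₁ ∘ swapOn E := by
    funext z
    simpa [supInfLabelling] using
      (congrFun h (swapOn (B \ A) (swapOn (exchangedCells A B ℓ₂) z))).symm
  have h₁₂ : ℓ₁ = ℓ₂ ∘ swapOn E := by
    funext z
    simp [h₂₁]
  have hE : E ⊆ A ∩ B := symmDiff_le_sup.trans (sup_le exchangedCells_subset exchangedCells_subset)
  have hE₁ : E ∈ admissibleSwaps A B ℓ₁ := mem_admissibleSwaps.2 ⟨hE, h₂₁ ▸ h₂.strictMonoOn⟩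
  have hE₂ : E ∈ admissibleSwaps A B ℓ₂ := mem_admissibleSwaps.2 ⟨hE, h₁₂ ▸ h₁.strictMonoOn⟩
  have hE_empty : E = ∅ := (disjoint_sup_right.2
    ⟨disjoint_exchangedCells hE₁, disjoint_exchangedCells hE₂⟩).eq_bot_of_le symmDiff_le_sup
  funext z
  simp [h₂₁, hE_empty]

theorem card_isLabelling_disjSum_le (hA : IsLowerSet (A : Set α)) (hB : IsLowerSet (B : Set α))
    (hU : U.card = A.card + B.card) :
    Nat.card {ℓ // IsLabelling (A.disjSum B) U ℓ} ≤
      Nat.card {ℓ // IsLabelling ((A ∪ B).disjSum (A ∩ B)) U ℓ} := by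
  have := finite_isLabelling (s := (A ∪ B).disjSum (A ∩ B))
    (by rw [card_disjSum, card_union_add_card_inter, hU])
  exact Nat.card_le_card_of_injective (fun ℓ => ⟨_, isLabelling_supInfLabelling hA hB ℓ.2⟩)
    fun ℓ₁ ℓ₂ h => Subtype.ext (supInfLabelling_injOn ℓ₁.2 ℓ₂.2 (congrArg Subtype.val h))

theorem numLinearExtensions_mul_le (hA : IsLowerSet (A : Set α)) (hB : IsLowerSet (B : Set α)) :
    numLinearExtensions A * numLinearExtensions B * ((A ∪ B).card ! * (A ∩ B).card !) ≤
      numLinearExtensions (A ∪ B) * numLinearExtensions (A ∩ B) * (A.card ! * B.card !) := by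
  set N := A.card + B.card
  have hN : (A ∪ B).card + (A ∩ B).card = N := card_union_add_card_inter A B
  have key := card_isLabelling_disjSum_le hA hB (card_range N)
  rw [card_isLabelling_disjSum (card_range N), card_isLabelling_disjSum (by rw [card_range, hN]),
    card_range] at key
  have choose_mul {a b : ℕ} (h : a + b = N) : N.choose a * (a ! * b !) = N ! := by
    rw [← mul_assoc, ← Nat.choose_mul_factorial_mul_factorial (h ▸ le_add_right le_rfl : a ≤ N),
      ← h, Nat.add_sub_cancel_left]
  refine Nat.le_of_mul_le_mul_left ?_ N.factorial_pos
  calc N ! * (numLinearExtensions A * numLinearExtensions B * ((A ∪ B).card ! * (A ∩ B).card !))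
      = N.choose A.card * (numLinearExtensions A * numLinearExtensions B) *
          (A.card ! * B.card !) * ((A ∪ B).card ! * (A ∩ B).card !) := by
        rw [← choose_mul rfl]; ring
    _ ≤ N.choose (A ∪ B).card * (numLinearExtensions (A ∪ B) * numLinearExtensions (A ∩ B)) *
          (A.card ! * B.card !) * ((A ∪ B).card ! * (A ∩ B).card !) := by gcongr
    _ = N ! * (numLinearExtensions (A ∪ B) * numLinearExtensions (A ∩ B) *
          (A.card ! * B.card !)) := by
        rw [← choose_mul hN]; ring

end Bjorner

theorem sytCard_eq_numLinearExtensions (c : Finset (ℕ × ℕ)) :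
    sytCard c = numLinearExtensions c :=
  Nat.card_congr <| Equiv.subtypeEquivRight fun _ =>
    ⟨fun h _ _ hab => h _ _ hab.le.1 hab.le.2 hab.ne,
      fun h _ _ h₁ h₂ hne => h (lt_of_le_of_ne ⟨h₁, h₂⟩ hne)⟩

/-- **Björner's inequality** for unions and intersections of Young diagrams. -/
theorem bjorner_inequality (μ ν : YoungDiagram) :
    fHat (μ ⊔ ν).cells * fHat (μ ⊓ ν).cells ≥ fHat μ.cells * fHat ν.cells := by
  have h := numLinearExtensions_mul_le μ.isLowerSet ν.isLowerSet
  rw [← YoungDiagram.cells_sup, ← YoungDiagram.cells_inf] at h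
  simp only [fHat, sytCard_eq_numLinearExtensions, ge_iff_le]
  rw [div_mul_div_comm, div_mul_div_comm, div_le_div_iff₀ (by positivity) (by positivity)]
  exact_mod_cast h
end

section
/- Let μ/α and ν/β be skew Young diagrams. Then f̂((μ∨ν)/(α∨β))·f̂((μ∧ν)/(α∧β)) ≥ f̂(μ/α)·f̂(ν/β), where f(λ/τ) is the number of standard Young tableaux of skew shape λ/τ, f̂(λ/τ) := f(λ/τ)/|λ/τ|!, and ∨, ∧ denote componentwise max and min of partitions. -/
/-!
For a finite poset `P` with `n` elements and `e(P)` linear extensions, the injective monotone maps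
`P → Fin k` are exactly a linear extension followed by an order embedding `Fin n ↪o Fin k`, so
there are `e(P) * k.choose n` of them, while the non-injective maps number only
`k ^ n - k.descFactorial n = o(k ^ n)`. Hence `f̂(P) = e(P) / n!` is the limit of
`#{monotone P → Fin k} / k ^ n`.

A monotone filling of `μ/α` is the same as a monotone map on `S = μ ∪ ν` which is `⊥` on `α` and
`⊤` off `μ`. In the distributive lattice `S → Fin k`, meets of such maps for `μ/α` and `ν/β` are
pinned in this way for `(μ ∨ ν)/(α ∨ β)` and joins for `(μ ∧ ν)/(α ∧ β)`, so Daykin's inequality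
`#A * #B ≤ #(A ⊼ B) * #(A ⊻ B)` compares the four counts for every `k`. As
`|μ/α| + |ν/β| = |(μ ∨ ν)/(α ∨ β)| + |(μ ∧ ν)/(α ∧ β)|`, dividing by `k ^ (|μ/α| + |ν/β|)` and
letting `k → ∞` gives the inequality.
-/

open Finset Function
open scoped FinsetFamily

theorem card_not_injective_add_descFactorial (α β : Type*) [Fintype α] [Fintype β]
    [DecidableEq α] [DecidableEq β] :
    #{y : α → β | ¬ Injective y} + (Fintype.card β).descFactorial (Fintype.card α) =
      Fintype.card β ^ Fintype.card α := by
  rw [← Fintype.card_embedding_eq, ← Fintype.card_fun, ← Fintype.card_congr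
    (Equiv.subtypeInjectiveEquivEmbedding α β), Fintype.card_subtype, add_comm,
    card_filter_add_card_filter_not, card_univ]

theorem card_sdiff_union_add_card_sdiff_inter {β : Type*} [DecidableEq β]
    {i₁ o₁ i₂ o₂ : Finset β} (h₁ : i₁ ⊆ o₁) (h₂ : i₂ ⊆ o₂) :
    #((o₁ ∪ o₂) \ (i₁ ∪ i₂)) + #((o₁ ∩ o₂) \ (i₁ ∩ i₂)) = #(o₁ \ i₁) + #(o₂ \ i₂) := by
  have hunion := union_subset_union h₁ h₂
  have hinter := inter_subset_inter h₁ h₂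
  rw [card_sdiff_of_subset hunion, card_sdiff_of_subset hinter, card_sdiff_of_subset h₁,
    card_sdiff_of_subset h₂]
  have := card_union_add_card_inter o₁ o₂
  have := card_union_add_card_inter i₁ i₂
  have := card_le_card hunion
  have := card_le_card hinter
  have := card_le_card h₁
  have := card_le_card h₂
  omega

section LinearExtensions

open Filter Topology Asymptotics

variable {α : Type*} [PartialOrder α] [Fintype α] [DecidableEq α] [DecidableLE α] {n : ℕ}

theorem card_monotone_injective_image_eq (hn : Fintype.card α = n) {k : ℕ}
    {s : Finset (Fin k)} (hs : #s = n) :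
    #{y : α → Fin k | (Monotone y ∧ Injective y) ∧ univ.image y = s} =
      Nat.card {f : α ≃ Fin n // StrictMono f} := by
  classical
  rw [Nat.card_eq_fintype_card, ← card_univ, eq_comm]
  set g := s.orderEmbOfFin hs
  refine card_nbij (fun f a => g (f.1 a)) ?_ ?_ ?_
  · rintro ⟨f, hf⟩ -
    simp only [coe_filter, mem_univ, true_and, Set.mem_ofPred_eq]
    refine ⟨⟨g.monotone.comp hf.monotone, g.injective.comp f.injective⟩, ?_⟩
    change univ.image (g ∘ f) = s
    rw [← image_image, image_univ_of_surjective f.surjective, image_orderEmbOfFin_univ]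
  · rintro ⟨f, -⟩ - ⟨f', -⟩ - (hff' : (fun a => g (f a)) = fun a => g (f' a))
    exact Subtype.ext (Equiv.ext fun a => g.injective (congrFun hff' a))
  · intro y hy
    simp only [coe_filter, mem_univ, true_and, Set.mem_ofPred_eq] at hy
    obtain ⟨⟨hmono, hinj⟩, rfl⟩ := hy
    have hmem : ∀ a, y a ∈ univ.image y := fun a => mem_image_of_mem y (mem_univ a)
    let f : α → Fin n := fun a => ((univ.image y).orderIsoOfFin hs).symm ⟨y a, hmem a⟩
    have hgf : ∀ a, g (f a) = y a := fun a => by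
      rw [← coe_orderIsoOfFin_apply, OrderIso.apply_symm_apply]
    have hf : Bijective f := by
      refine (Fintype.bijective_iff_injective_and_card f).2 ⟨fun a b hab => hinj ?_, by simp [hn]⟩
      rw [← hgf, ← hgf, hab]
    refine ⟨⟨Equiv.ofBijective f hf, fun a b hab => ?_⟩, mem_coe.2 (mem_univ _), funext hgf⟩
    rw [← g.lt_iff_lt]
    simpa only [Equiv.ofBijective_apply, hgf] using hmono.strictMono_of_injective hinj hab

theorem card_monotone_injective (hn : Fintype.card α = n) (k : ℕ) :
    #{y : α → Fin k | Monotone y ∧ Injective y} =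
      Nat.card {f : α ≃ Fin n // StrictMono f} * k.choose n := by
  have himage : ∀ y ∈ ({y : α → Fin k | Monotone y ∧ Injective y} : Finset _),
      univ.image y ∈ powersetCard n univ := fun y hy => by
    rw [mem_powersetCard, card_image_of_injective _ (mem_filter.1 hy).2.2, card_univ, hn]
    exact ⟨subset_univ _, rfl⟩
  rw [card_eq_sum_card_fiberwise himage, sum_const_nat fun s hs => ?_, card_powersetCard,
    card_univ, Fintype.card_fin, mul_comm]
  rw [filter_filter]
  exact card_monotone_injective_image_eq hn (mem_powersetCard.1 hs).2

theorem le_card_monotone (hn : Fintype.card α = n) (k : ℕ) :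
    Nat.card {f : α ≃ Fin n // StrictMono f} * k.choose n ≤ #{y : α → Fin k | Monotone y} := by
  rw [← card_monotone_injective hn]
  exact card_le_card (monotone_filter_right _ fun _ _ hy => hy.1)

theorem card_monotone_add_descFactorial_le (hn : Fintype.card α = n) (k : ℕ) :
    #{y : α → Fin k | Monotone y} + k.descFactorial n ≤
      Nat.card {f : α ≃ Fin n // StrictMono f} * k.choose n + k ^ n := by
  have hsplit : #{y : α → Fin k | Monotone y ∧ Injective y} +
      #{y : α → Fin k | Monotone y ∧ ¬ Injective y} = #{y : α → Fin k | Monotone y} := by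
    rw [← card_filter_add_card_filter_not (s := {y : α → Fin k | Monotone y}) Injective,
      filter_filter, filter_filter]
  have hnoninj : #{y : α → Fin k | Monotone y ∧ ¬ Injective y} ≤
      #{y : α → Fin k | ¬ Injective y} :=
    card_le_card (monotone_filter_right _ fun _ _ hy => hy.2)
  have hcount := card_not_injective_add_descFactorial α (Fin k)
  rw [Fintype.card_fin, hn] at hcount
  rw [← card_monotone_injective hn]
  omega

theorem tendsto_card_monotone_div_pow (hn : Fintype.card α = n) :
    Tendsto (fun k : ℕ => (#{y : α → Fin k | Monotone y} : ℝ) / k ^ n) atTop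
      (𝓝 (Nat.card {f : α ≃ Fin n // StrictMono f} / n.factorial)) := by
  set e := Nat.card {f : α ≃ Fin n // StrictMono f}
  have hratio : Tendsto (fun k : ℕ => (k.descFactorial n : ℝ) / k ^ n) atTop (𝓝 1) := by
    refine (isEquivalent_iff_tendsto_one ?_).1 (isEquivalent_descFactorial n)
    filter_upwards [eventually_gt_atTop 0] with k hk
    positivity
  have hdefect :
      Tendsto (fun k : ℕ => ((k : ℝ) ^ n - k.descFactorial n) / k ^ n) atTop (𝓝 0) := by
    simpa [← neg_div, neg_sub] using
      (isEquivalent_descFactorial n).isLittleO.tendsto_div_nhds_zero.neg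
  have hchoose : ∀ k : ℕ, ((e * k.choose n : ℕ) : ℝ) / k ^ n =
      e / n.factorial * ((k.descFactorial n : ℝ) / k ^ n) := fun k => by
    rw [Nat.descFactorial_eq_factorial_mul_choose]
    push_cast
    field_simp
  refine tendsto_of_tendsto_of_tendsto_of_le_of_le
    (by simpa using hratio.const_mul (e / n.factorial : ℝ))
    (by simpa using (hratio.const_mul (e / n.factorial : ℝ)).add hdefect) (fun k => ?_)
    (fun k => ?_)
  · rw [← hchoose]
    exact div_le_div_of_nonneg_right (Nat.cast_le.2 (le_card_monotone hn k)) (by positivity)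
  · rw [← hchoose, ← add_div]
    refine div_le_div_of_nonneg_right ?_ (by positivity)
    have h : ((#{y : α → Fin k | Monotone y} + k.descFactorial n : ℕ) : ℝ) ≤
        ((e * k.choose n + k ^ n : ℕ) : ℝ) :=
      Nat.cast_le.2 (card_monotone_add_descFactorial_le hn k)
    push_cast at h ⊢
    linarith

end LinearExtensions

section PinnedFillings

variable {β L : Type*} [PartialOrder β] [DecidableEq β]

def extendPinned [Bot L] [Top L] {S : Finset β} (inner outer : Finset β)
    (y : (outer \ inner : Finset β) → L) (a : S) : L :=
  if h : ↑a ∈ outer \ inner then y ⟨a, h⟩ else if ↑a ∈ inner then ⊥ else ⊤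

theorem monotone_extendPinned [Preorder L] [BoundedOrder L] {S inner outer : Finset β}
    (hi : IsLowerSet (inner : Set β)) (ho : IsLowerSet (outer : Set β))
    {y : (outer \ inner : Finset β) → L} (hy : Monotone y) :
    Monotone (extendPinned (S := S) inner outer y) := by
  intro a b (hab : (a : β) ≤ b)
  unfold extendPinned
  by_cases hb : ↑b ∈ outer \ inner
  · rw [dif_pos hb]
    by_cases ha : ↑a ∈ outer \ inner
    · rw [dif_pos ha]
      exact hy hab
    · have hai : ↑a ∈ inner := of_not_not fun hai =>
        ha (mem_sdiff.2 ⟨ho hab (mem_sdiff.1 hb).1, hai⟩)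
      rw [dif_neg ha, if_pos hai]
      exact bot_le
  · rw [dif_neg hb]
    by_cases hbi : ↑b ∈ inner
    · have hai : ↑a ∈ inner := hi hab hbi
      rw [if_pos hbi, dif_neg fun h => (mem_sdiff.1 h).2 hai, if_pos hai]
    · rw [if_neg hbi]
      exact le_top

variable [DecidableLE β] [Fintype L] [DecidableEq L]

def pinnedFillings [Preorder L] [BoundedOrder L] [DecidableLE L] (S inner outer : Finset β) :
    Finset (S → L) :=
  {x | Monotone x ∧ (∀ a : S, ↑a ∈ inner → x a = ⊥) ∧ ∀ a : S, ↑a ∉ outer → x a = ⊤}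

theorem mem_pinnedFillings [Preorder L] [BoundedOrder L] [DecidableLE L]
    {S inner outer : Finset β} {x : S → L} :
    x ∈ pinnedFillings S inner outer ↔
      Monotone x ∧ (∀ a : S, ↑a ∈ inner → x a = ⊥) ∧ ∀ a : S, ↑a ∉ outer → x a = ⊤ := by
  simp [pinnedFillings]

theorem card_pinnedFillings [Preorder L] [BoundedOrder L] [DecidableLE L]
    {S inner outer : Finset β} (hio : inner ⊆ outer) (hoS : outer ⊆ S)
    (hi : IsLowerSet (inner : Set β)) (ho : IsLowerSet (outer : Set β)) :
    #(pinnedFillings (L := L) S inner outer) =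
      #{y : (outer \ inner : Finset β) → L | Monotone y} := by
  refine card_nbij' (fun x c => x ⟨c, hoS (mem_sdiff.1 c.2).1⟩) (extendPinned inner outer)
    (fun x hx => ?_) (fun y hy => ?_) (fun x hx => ?_) (fun y _ => ?_)
  · rw [mem_coe, mem_pinnedFillings] at hx
    simp only [coe_filter, mem_univ, true_and, Set.mem_ofPred_eq]
    exact fun c d hcd => hx.1 hcd
  · simp only [coe_filter, mem_univ, true_and, Set.mem_ofPred_eq] at hy
    refine mem_pinnedFillings.2 ⟨monotone_extendPinned hi ho hy, fun a ha => ?_, fun a ha => ?_⟩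
    · rw [extendPinned, dif_neg fun h => (mem_sdiff.1 h).2 ha, if_pos ha]
    · rw [extendPinned, dif_neg fun h => ha (mem_sdiff.1 h).1, if_neg fun h => ha (hio h)]
  · rw [mem_coe, mem_pinnedFillings] at hx
    funext a
    by_cases h : ↑a ∈ outer \ inner
    · rw [extendPinned, dif_pos h]
    · rw [extendPinned, dif_neg h]
      by_cases hai : ↑a ∈ inner
      · rw [if_pos hai, hx.2.1 a hai]
      · rw [if_neg hai, hx.2.2 a fun hao => h (mem_sdiff.2 ⟨hao, hai⟩)]
  · funext c
    simp only [extendPinned, dif_pos c.2]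

variable [DistribLattice L] [BoundedOrder L] [DecidableLE L]

theorem infs_pinnedFillings_subset (S i₁ o₁ i₂ o₂ : Finset β) :
    pinnedFillings (L := L) S i₁ o₁ ⊼ pinnedFillings S i₂ o₂ ⊆
      pinnedFillings S (i₁ ∪ i₂) (o₁ ∪ o₂) := by
  simp only [subset_iff, mem_infs, mem_pinnedFillings]
  rintro _ ⟨x, ⟨hx, hx₀, hx₁⟩, y, ⟨hy, hy₀, hy₁⟩, rfl⟩
  refine ⟨hx.inf hy, fun a ha => ?_, fun a ha => ?_⟩
  · rcases mem_union.1 ha with ha | ha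
    · simp [hx₀ a ha]
    · simp [hy₀ a ha]
  · rw [mem_union, not_or] at ha
    simp [hx₁ a ha.1, hy₁ a ha.2]

theorem sups_pinnedFillings_subset (S i₁ o₁ i₂ o₂ : Finset β) :
    pinnedFillings (L := L) S i₁ o₁ ⊻ pinnedFillings S i₂ o₂ ⊆
      pinnedFillings S (i₁ ∩ i₂) (o₁ ∩ o₂) := by
  simp only [subset_iff, mem_sups, mem_pinnedFillings]
  rintro _ ⟨x, ⟨hx, hx₀, hx₁⟩, y, ⟨hy, hy₀, hy₁⟩, rfl⟩
  refine ⟨hx.sup hy, fun a ha => ?_, fun a ha => ?_⟩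
  · rw [mem_inter] at ha
    simp [hx₀ a ha.1, hy₀ a ha.2]
  · rcases not_and_or.1 (mem_inter.not.1 ha) with ha | ha
    · simp [hx₁ a ha]
    · simp [hy₁ a ha]

theorem card_pinnedFillings_mul_le (S i₁ o₁ i₂ o₂ : Finset β) :
    #(pinnedFillings (L := L) S i₁ o₁) * #(pinnedFillings (L := L) S i₂ o₂) ≤
      #(pinnedFillings (L := L) S (i₁ ∪ i₂) (o₁ ∪ o₂)) *
        #(pinnedFillings (L := L) S (i₁ ∩ i₂) (o₁ ∩ o₂)) :=
  (le_card_infs_mul_card_sups _ _).trans <| Nat.mul_le_mul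
    (card_le_card (infs_pinnedFillings_subset ..)) (card_le_card (sups_pinnedFillings_subset ..))

end PinnedFillings

section SkewShapes

open Filter Topology

theorem le_of_tendsto_div_pow_of_mul_le {a b c d : ℕ → ℝ} {p q r s : ℕ} {A B C D : ℝ}
    (hpq : p + q = r + s) (ha : Tendsto (fun k : ℕ => a k / k ^ p) atTop (𝓝 A))
    (hb : Tendsto (fun k : ℕ => b k / k ^ q) atTop (𝓝 B))
    (hc : Tendsto (fun k : ℕ => c k / k ^ r) atTop (𝓝 C))
    (hd : Tendsto (fun k : ℕ => d k / k ^ s) atTop (𝓝 D))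
    (hle : ∀ᶠ k in atTop, a k * b k ≤ c k * d k) : A * B ≤ C * D := by
  refine le_of_tendsto_of_tendsto (ha.mul hb) (hc.mul hd) (hle.mono fun k hk => ?_)
  simp only [div_mul_div_comm, ← pow_add, hpq]
  exact div_le_div_of_nonneg_right hk (by positivity)

theorem sytCard_eq_card_strictMono (c : Finset (ℕ × ℕ)) :
    sytCard c = Nat.card {f : c ≃ Fin #c // StrictMono f} := by
  refine Nat.card_congr (Equiv.subtypeEquivRight fun f => ?_)
  simp only [StrictMono, lt_iff_le_and_ne, ← Subtype.coe_le_coe, Prod.le_def, and_imp]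

theorem tendsto_card_monotone_div_pow_fHat (P : Finset (ℕ × ℕ)) :
    Tendsto (fun k : ℕ => (#{y : P → Fin k | Monotone y} : ℝ) / k ^ #P) atTop (𝓝 (fHat P)) := by
  rw [fHat, sytCard_eq_card_strictMono]
  exact tendsto_card_monotone_div_pow (Fintype.card_coe P)

theorem fHat_mul_fHat_le {i₁ o₁ i₂ o₂ : Finset (ℕ × ℕ)} (h₁ : i₁ ⊆ o₁) (h₂ : i₂ ⊆ o₂)
    (hi₁ : IsLowerSet (i₁ : Set (ℕ × ℕ))) (ho₁ : IsLowerSet (o₁ : Set (ℕ × ℕ)))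
    (hi₂ : IsLowerSet (i₂ : Set (ℕ × ℕ))) (ho₂ : IsLowerSet (o₂ : Set (ℕ × ℕ))) :
    fHat (o₁ \ i₁) * fHat (o₂ \ i₂) ≤
      fHat ((o₁ ∪ o₂) \ (i₁ ∪ i₂)) * fHat ((o₁ ∩ o₂) \ (i₁ ∩ i₂)) := by
  refine le_of_tendsto_div_pow_of_mul_le (card_sdiff_union_add_card_sdiff_inter h₁ h₂).symm
    (tendsto_card_monotone_div_pow_fHat _) (tendsto_card_monotone_div_pow_fHat _)
    (tendsto_card_monotone_div_pow_fHat _) (tendsto_card_monotone_div_pow_fHat _) ?_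
  filter_upwards [eventually_gt_atTop 0] with k hk
  have : NeZero k := ⟨hk.ne'⟩
  have h := card_pinnedFillings_mul_le (L := Fin k) (o₁ ∪ o₂) i₁ o₁ i₂ o₂
  rw [card_pinnedFillings h₁ subset_union_left hi₁ ho₁,
    card_pinnedFillings h₂ subset_union_right hi₂ ho₂,
    card_pinnedFillings (union_subset_union h₁ h₂) subset_rfl
      (by rw [coe_union]; exact hi₁.union hi₂) (by rw [coe_union]; exact ho₁.union ho₂),
    card_pinnedFillings (inter_subset_inter h₁ h₂) (inter_subset_left.trans subset_union_left)
      (by rw [coe_inter]; exact hi₁.inter hi₂) (by rw [coe_inter]; exact ho₁.inter ho₂)] at h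
  exact_mod_cast h

end SkewShapes

/-- **Generalized Björner inequality** for skew shapes `μ/α` and `ν/β`. -/
theorem generalized_bjorner (μ ν α β : YoungDiagram) (hα : α ≤ μ) (hβ : β ≤ ν) :
    fHat ((μ ⊔ ν).cells \ (α ⊔ β).cells) * fHat ((μ ⊓ ν).cells \ (α ⊓ β).cells) ≥
      fHat (μ.cells \ α.cells) * fHat (ν.cells \ β.cells) :=
  fHat_mul_fHat_le (YoungDiagram.cells_subset_iff.2 hα) (YoungDiagram.cells_subset_iff.2 hβ)
    α.isLowerSet μ.isLowerSet β.isLowerSet ν.isLowerSet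
end

section
/- Let μ/α and ν/β be skew Young diagrams and N ≥ max(ℓ(μ), ℓ(ν)). Then the difference of products of skew Schur polynomials s_{(μ∨ν)/(α∨β)}(z₁,…,z_N)·s_{(μ∧ν)/(α∧β)}(z₁,…,z_N) − s_{μ/α}(z₁,…,z_N)·s_{ν/β}(z₁,…,z_N) is a polynomial with nonnegative coefficients (is monomial-positive). -/
/-!
Pad a semistandard filling of `λ/τ` with entries `0, …, N - 1` to a semistandard integer array on
all of `ℕ × ℕ` by writing `i - N` in the cells of `τ` and `i + N` in the cells outside `λ`, in row
`i`. For such arrays `u`, `v` of shapes `μ/α`, `ν/β`, the pointwise minimum and maximum are arrays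
of shapes `(μ ∨ ν)/(α ∨ β)` and `(μ ∧ ν)/(α ∧ β)`, and since `{min, max} = {u, v}` at every cell
the content is preserved. To make the map injective, `(u, v)` is kept on the conflict components
(adjacent cells whose distinct entries overlap) lying inside the common part of the two skew
shapes, and replaced by `(min, max)` elsewhere. Components are separated by non-conflicting
pairs, so semistandardness survives; and a component leaving the common part reaches a cell where
the shapes dictate which of `u`, `v` is smaller, an order that cannot flip along a conflict, so
`(u, v)` can be recovered.
-/

open scoped Classical in
/-- The skew Schur polynomial on a set of cells `c`, in variables `z₁,…,z_N`
(indexed by `Fin N`): the generating polynomial of fillings of `c` with entries in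
`{1,…,N}` that weakly increase along rows and strictly increase down columns,
each filling `f` contributing the monomial `Π_{x ∈ c} z_{f(x)}`. -/
noncomputable def schurPoly (c : Finset (ℕ × ℕ)) (N : ℕ) : MvPolynomial (Fin N) ℤ :=
  ∑ f ∈ Finset.univ.filter
      (fun f : {x // x ∈ c} → Fin N =>
        (∀ a b : {x // x ∈ c}, (a : ℕ × ℕ).1 = (b : ℕ × ℕ).1 →
          (a : ℕ × ℕ).2 ≤ (b : ℕ × ℕ).2 → f a ≤ f b) ∧
        (∀ a b : {x // x ∈ c}, (a : ℕ × ℕ).2 = (b : ℕ × ℕ).2 →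
          (a : ℕ × ℕ).1 < (b : ℕ × ℕ).1 → f a < f b)),
    ∏ x : {x // x ∈ c}, MvPolynomial.X (f x)

open Finset MvPolynomial

noncomputable section

theorem MvPolynomial.coeff_sum_sub_sum_nonneg {R σ ι κ : Type*} [CommRing R] [PartialOrder R]
    [IsOrderedAddMonoid R] {s : Finset ι} {t : Finset κ} {f : ι → MvPolynomial σ R}
    {g : κ → MvPolynomial σ R} (e : κ → ι) (he : Set.MapsTo e t s) (he' : Set.InjOn e t)
    (hfg : ∀ b ∈ t, f (e b) = g b) (hf : ∀ a ∈ s, ∀ d, 0 ≤ coeff d (f a)) (d : σ →₀ ℕ) :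
    0 ≤ coeff d (∑ a ∈ s, f a - ∑ b ∈ t, g b) := by
  classical
  have himage : t.image e ⊆ s := by simpa [Set.MapsTo, Finset.subset_iff] using he
  rw [← sum_congr rfl hfg, ← sum_image he', ← sum_sdiff_eq_sub himage, coeff_sum]
  exact sum_nonneg fun a ha => hf a (mem_sdiff.1 ha).1 d

theorem YoungDiagram.fst_lt_of_colLen_zero_le {μ : YoungDiagram} {N : ℕ} (hN : μ.colLen 0 ≤ N)
    {x : ℕ × ℕ} (hx : x ∈ μ) : x.1 < N :=
  (YoungDiagram.mem_iff_lt_colLen.1 (μ.up_left_mem le_rfl (Nat.zero_le _) hx)).trans_le hN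

namespace SkewSchur

inductive CellStep : ℕ × ℕ → ℕ × ℕ → ℤ → Prop
  | right (i j : ℕ) : CellStep (i, j) (i, j + 1) 0
  | down (i j : ℕ) : CellStep (i, j) (i + 1, j) 1

theorem CellStep.le {x y : ℕ × ℕ} {δ : ℤ} (h : CellStep x y δ) : x ≤ y := by
  cases h <;> simp [Prod.mk_le_mk]

theorem CellStep.fst_eq {x y : ℕ × ℕ} {δ : ℤ} (h : CellStep x y δ) : (y.1 : ℤ) = x.1 + δ := by
  cases h <;> simp

def IsSemistandard (u : ℕ × ℕ → ℤ) : Prop :=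
  ∀ ⦃x y δ⦄, CellStep x y δ → u x + δ ≤ u y

theorem IsSemistandard.add_le {u : ℕ × ℕ → ℤ} (hu : IsSemistandard u) {x y : ℕ × ℕ}
    (h : x ≤ y) : u x + (y.1 - x.1 : ℤ) ≤ u y := by
  obtain ⟨i, j⟩ := x
  obtain ⟨i', j'⟩ := y
  obtain ⟨hi, hj⟩ := Prod.mk_le_mk.1 h
  clear h
  have hrow : u (i, j) ≤ u (i, j') := by
    induction j', hj using Nat.le_induction with
    | base => exact le_rfl
    | succ n _ ih => have := hu (.right i n); omega
  have hcol : ∀ k, i ≤ k → u (i, j') + (k - i : ℤ) ≤ u (k, j') := by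
    intro k hk
    induction k, hk using Nat.le_induction with
    | base => simp
    | succ n _ ih => have := hu (.down n j'); push_cast; omega
  have := hcol i' hi
  dsimp only
  omega

variable {N : ℕ} {inner outer : YoungDiagram}

def IsSemistandardFilling (c : Finset (ℕ × ℕ)) (f : {x // x ∈ c} → Fin N) : Prop :=
  (∀ a b : {x // x ∈ c}, (a : ℕ × ℕ).1 = (b : ℕ × ℕ).1 →
    (a : ℕ × ℕ).2 ≤ (b : ℕ × ℕ).2 → f a ≤ f b) ∧
  (∀ a b : {x // x ∈ c}, (a : ℕ × ℕ).2 = (b : ℕ × ℕ).2 →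
    (a : ℕ × ℕ).1 < (b : ℕ × ℕ).1 → f a < f b)

/-- `w` extends a filling of `outer / inner` by entries `0, …, N - 1`, standing for
`z₁, …, z_N`. The padding values `i ∓ N` in row `i` keep the extension of a semistandard filling
semistandard as long as `outer` has fewer than `N` rows. -/
structure IsPadded (N : ℕ) (inner outer : YoungDiagram) (w : ℕ × ℕ → ℤ) : Prop where
  of_mem_inner : ∀ x ∈ inner, w x = x.1 - N
  of_mem_skew : ∀ x ∈ outer, x ∉ inner → 0 ≤ w x ∧ w x < N
  of_notMem_outer : ∀ x ∉ outer, x ∉ inner → w x = x.1 + N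

section IsPadded

variable {w : ℕ × ℕ → ℤ} {x : ℕ × ℕ}

theorem IsPadded.nonneg (hw : IsPadded N inner outer w) (hx : x ∉ inner) : 0 ≤ w x := by
  by_cases hxo : x ∈ outer
  · exact (hw.of_mem_skew x hxo hx).1
  · rw [hw.of_notMem_outer x hxo hx]; omega

theorem IsPadded.le_add (hw : IsPadded N inner outer w) : w x ≤ x.1 + N := by
  by_cases hxi : x ∈ inner
  · rw [hw.of_mem_inner x hxi]; omega
  by_cases hxo : x ∈ outer
  · have := hw.of_mem_skew x hxo hxi; omega
  · rw [hw.of_notMem_outer x hxo hxi]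

theorem IsPadded.lt_of_mem (hw : IsPadded N inner outer w) (hN : ∀ x ∈ outer, x.1 < N)
    (hx : x ∈ outer) : w x < N := by
  have := hN x hx
  by_cases hxi : x ∈ inner
  · rw [hw.of_mem_inner x hxi]; omega
  · exact (hw.of_mem_skew x hx hxi).2

theorem IsPadded.sub_le (hw : IsPadded N inner outer w) (hN : ∀ x ∈ outer, x.1 < N) :
    x.1 - N ≤ w x := by
  by_cases hxi : x ∈ inner
  · rw [hw.of_mem_inner x hxi]
  by_cases hxo : x ∈ outer
  · have := hN x hxo; have := hw.nonneg hxi; omega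
  · rw [hw.of_notMem_outer x hxo hxi]; omega

theorem IsPadded.of_forall_eq_or {w' : ℕ × ℕ → ℤ} (hw : IsPadded N inner outer w)
    (h : ∀ x, w' x = w x ∨ x ∈ outer ∧ x ∉ inner ∧ 0 ≤ w' x ∧ w' x < N) :
    IsPadded N inner outer w' where
  of_mem_inner x hx := by
    obtain h | h := h x
    · rw [h, hw.of_mem_inner x hx]
    · exact absurd hx h.2.1
  of_mem_skew x hxo hxi := by
    obtain h | h := h x
    · rw [h]; exact hw.of_mem_skew x hxo hxi
    · exact h.2.2
  of_notMem_outer x hxo hxi := by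
    obtain h | h := h x
    · rw [h, hw.of_notMem_outer x hxo hxi]
    · exact absurd h.1 hxo

end IsPadded

theorem IsPadded.eq_of_notMem_skew {w w' : ℕ × ℕ → ℤ} (hw : IsPadded N inner outer w)
    (hw' : IsPadded N inner outer w') {x : ℕ × ℕ} (hx : x ∉ outer.cells \ inner.cells) :
    w x = w' x := by
  by_cases hxi : x ∈ inner
  · rw [hw.of_mem_inner x hxi, hw'.of_mem_inner x hxi]
  · have hxo : x ∉ outer := by simpa [hxi] using hx
    rw [hw.of_notMem_outer x hxo hxi, hw'.of_notMem_outer x hxo hxi]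

def pad (inner outer : YoungDiagram) (N : ℕ) (f : {x // x ∈ outer.cells \ inner.cells} → Fin N)
    (x : ℕ × ℕ) : ℤ :=
  if h : x ∈ outer.cells \ inner.cells then (f ⟨x, h⟩ : ℕ) else if x ∈ inner then x.1 - N
  else x.1 + N

theorem pad_of_mem_skew (f : {x // x ∈ outer.cells \ inner.cells} → Fin N) {x : ℕ × ℕ}
    (h : x ∈ outer.cells \ inner.cells) : pad inner outer N f x = (f ⟨x, h⟩ : ℕ) := by
  simp [pad, h]

theorem pad_coe (f : {x // x ∈ outer.cells \ inner.cells} → Fin N)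
    (a : {x // x ∈ outer.cells \ inner.cells}) : pad inner outer N f a = (f a : ℕ) :=
  pad_of_mem_skew f a.2

theorem isPadded_pad (f : {x // x ∈ outer.cells \ inner.cells} → Fin N) :
    IsPadded N inner outer (pad inner outer N f) where
  of_mem_inner x hx := by simp [pad, hx]
  of_mem_skew x hxo hxi := by
    have h : x ∈ outer.cells \ inner.cells := by simp [hxo, hxi]
    rw [pad_of_mem_skew f h]
    exact ⟨by positivity, by exact_mod_cast (f _).2⟩
  of_notMem_outer x hxo hxi := by simp [pad, hxo, hxi]

theorem pad_injective : Function.Injective (pad inner outer N) := by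
  intro f g h
  funext a
  have := congrFun h a
  rw [pad_coe, pad_coe] at this
  exact Fin.ext (by exact_mod_cast this)

theorem IsPadded.exists_pad_eq {w : ℕ × ℕ → ℤ} (hw : IsPadded N inner outer w) :
    ∃ f, pad inner outer N f = w := by
  have hskew (a : {x // x ∈ outer.cells \ inner.cells}) : 0 ≤ w a ∧ w a < N := by
    obtain ⟨hxo, hxi⟩ := mem_sdiff.1 a.2
    exact hw.of_mem_skew a (by simpa using hxo) (by simpa using hxi)
  refine ⟨fun a => ⟨(w a).toNat, by have := hskew a; omega⟩, funext fun x => ?_⟩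
  by_cases h : x ∈ outer.cells \ inner.cells
  · rw [pad_of_mem_skew _ h]
    have := hskew ⟨x, h⟩
    simp only [Int.toNat_of_nonneg this.1]
  · exact ((isPadded_pad _).eq_of_notMem_skew hw h)

theorem IsSemistandardFilling.isSemistandard_pad (hN : ∀ x ∈ outer, x.1 < N)
    {f : {x // x ∈ outer.cells \ inner.cells} → Fin N}
    (hf : IsSemistandardFilling (outer.cells \ inner.cells) f) :
    IsSemistandard (pad inner outer N f) := by
  intro x y δ hxy
  have hp := isPadded_pad f
  have hδ := hxy.fst_eq
  by_cases hxi : x ∈ inner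
  · rw [hp.of_mem_inner x hxi]
    have := hp.sub_le (x := y) hN
    omega
  have hyi : y ∉ inner := fun h => hxi (inner.isLowerSet hxy.le h)
  by_cases hyo : y ∈ outer
  · have hxo : x ∈ outer := outer.isLowerSet hxy.le hyo
    have hxs : x ∈ outer.cells \ inner.cells := by simp [hxo, hxi]
    have hys : y ∈ outer.cells \ inner.cells := by simp [hyo, hyi]
    rw [pad_of_mem_skew f hxs, pad_of_mem_skew f hys]
    cases hxy with
    | right i j =>
      have := Fin.le_def.1 (hf.1 ⟨_, hxs⟩ ⟨_, hys⟩ rfl (Nat.le_succ j))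
      omega
    | down i j =>
      have := Fin.lt_def.1 (hf.2 ⟨_, hxs⟩ ⟨_, hys⟩ rfl (Nat.lt_succ_self i))
      omega
  · rw [hp.of_notMem_outer y hyo hyi]
    have := hp.le_add (x := x)
    omega

theorem isSemistandardFilling_of_pad {f : {x // x ∈ outer.cells \ inner.cells} → Fin N}
    (h : IsSemistandard (pad inner outer N f)) :
    IsSemistandardFilling (outer.cells \ inner.cells) f := by
  constructor
  · intro a b hrow hcol
    have := h.add_le (x := a) (y := b) (Prod.mk_le_mk.2 ⟨hrow.le, hcol⟩)
    rw [pad_coe, pad_coe, hrow] at this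
    rw [Fin.le_def]
    omega
  · intro a b hcol hrow
    have := h.add_le (x := a) (y := b) (Prod.mk_le_mk.2 ⟨hrow.le, hcol.le⟩)
    rw [pad_coe, pad_coe] at this
    rw [Fin.lt_def]
    omega

open scoped Classical in
def paddedTableaux (inner outer : YoungDiagram) (N : ℕ) : Finset (ℕ × ℕ → ℤ) :=
  (univ.filter (IsSemistandardFilling (outer.cells \ inner.cells))).image (pad inner outer N)

theorem mem_paddedTableaux (hN : ∀ x ∈ outer, x.1 < N) {w : ℕ × ℕ → ℤ} :
    w ∈ paddedTableaux inner outer N ↔ IsSemistandard w ∧ IsPadded N inner outer w := by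
  simp only [paddedTableaux, mem_image, mem_filter, mem_univ, true_and]
  constructor
  · rintro ⟨f, hf, rfl⟩
    exact ⟨hf.isSemistandard_pad hN, isPadded_pad f⟩
  · rintro ⟨hs, hp⟩
    obtain ⟨f, rfl⟩ := hp.exists_pad_eq
    exact ⟨f, isSemistandardFilling_of_pad hs, rfl⟩

def cellExponent (N : ℕ) (k : ℤ) : Fin N →₀ ℕ :=
  if h : 0 ≤ k ∧ k < N then Finsupp.single ⟨k.toNat, by omega⟩ 1 else 0

theorem cellExponent_natCast (i : Fin N) : cellExponent N (i : ℕ) = Finsupp.single i 1 := by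
  rw [cellExponent, dif_pos ⟨by positivity, by exact_mod_cast i.2⟩]
  congr

theorem cellExponent_eq_zero {k : ℤ} (h : k < 0 ∨ N ≤ k) : cellExponent N k = 0 := by
  rw [cellExponent, dif_neg (by omega)]

def content (N : ℕ) (T : Finset (ℕ × ℕ)) (w : ℕ × ℕ → ℤ) : Fin N →₀ ℕ :=
  ∑ x ∈ T, cellExponent N (w x)

theorem content_pad {T : Finset (ℕ × ℕ)} (hT : outer.cells ⊆ T) (hTN : ∀ x ∈ T, x.1 < N)
    (f : {x // x ∈ outer.cells \ inner.cells} → Fin N) :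
    content N T (pad inner outer N f) = ∑ a, Finsupp.single (f a) 1 := by
  have hp := isPadded_pad f
  rw [content, ← sum_subset (sdiff_subset.trans hT), ← sum_coe_sort]
  · exact sum_congr rfl fun a _ => by rw [pad_coe, cellExponent_natCast]
  · intro x hxT hx
    apply cellExponent_eq_zero
    by_cases hxi : x ∈ inner
    · have := hTN x hxT
      rw [hp.of_mem_inner x hxi]
      omega
    · have hxo : x ∉ outer := by simpa [hxi] using hx
      rw [hp.of_notMem_outer x hxo hxi]
      omega

theorem schurPoly_eq_sum_paddedTableaux {T : Finset (ℕ × ℕ)} (hT : outer.cells ⊆ T)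
    (hTN : ∀ x ∈ T, x.1 < N) :
    schurPoly (outer.cells \ inner.cells) N =
      ∑ w ∈ paddedTableaux inner outer N, monomial (content N T w) 1 := by
  classical
  rw [paddedTableaux, sum_image pad_injective.injOn, schurPoly]
  refine sum_congr (by ext; simp only [mem_filter, IsSemistandardFilling]) fun f _ => ?_
  rw [content_pad hT hTN, monomial_sum_one]
  rfl

theorem schurPoly_mul_schurPoly {inner' outer' : YoungDiagram} {T : Finset (ℕ × ℕ)}
    (hT : outer.cells ⊆ T) (hT' : outer'.cells ⊆ T) (hTN : ∀ x ∈ T, x.1 < N) :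
    schurPoly (outer.cells \ inner.cells) N * schurPoly (outer'.cells \ inner'.cells) N =
      ∑ p ∈ paddedTableaux inner outer N ×ˢ paddedTableaux inner' outer' N,
        monomial (content N T p.1 + content N T p.2) 1 := by
  rw [schurPoly_eq_sum_paddedTableaux hT hTN, schurPoly_eq_sum_paddedTableaux hT' hTN,
    sum_mul_sum, ← sum_product']
  simp only [monomial_mul, one_mul]

section Transfer

/-- Unless `x` and `y` conflict, `hi x + δ ≤ lo y`, so putting `(lo, hi)` in place of the
original pair at only one of the two cells keeps both arrays semistandard. -/
def Conflict (lo hi : ℕ × ℕ → ℤ) (x y : ℕ × ℕ) : Prop :=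
  lo x < hi x ∧ lo y < hi y ∧ ∃ δ, CellStep x y δ ∧ lo y < hi x + δ

def transferRegion (D : Set (ℕ × ℕ)) (lo hi : ℕ × ℕ → ℤ) : Set (ℕ × ℕ) :=
  {x | ∃ z, Relation.EqvGen (Conflict lo hi) x z ∧ lo z < hi z ∧ z ∉ D}

open scoped Classical in
def transferMin (D : Set (ℕ × ℕ)) (u v : ℕ × ℕ → ℤ) : ℕ × ℕ → ℤ :=
  (transferRegion D (u ⊓ v) (u ⊔ v)).piecewise (u ⊓ v) u

open scoped Classical in
def transferMax (D : Set (ℕ × ℕ)) (u v : ℕ × ℕ → ℤ) : ℕ × ℕ → ℤ :=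
  (transferRegion D (u ⊓ v) (u ⊔ v)).piecewise (u ⊔ v) v

variable {D : Set (ℕ × ℕ)} {u v : ℕ × ℕ → ℤ} {x y : ℕ × ℕ}

theorem transfer_of_mem_transferRegion (hx : x ∈ transferRegion D (u ⊓ v) (u ⊔ v)) :
    transferMin D u v x = min (u x) (v x) ∧ transferMax D u v x = max (u x) (v x) := by
  simp [transferMin, transferMax, hx]

theorem transfer_of_notMem_transferRegion (hx : x ∉ transferRegion D (u ⊓ v) (u ⊔ v)) :
    transferMin D u v x = u x ∧ transferMax D u v x = v x := by
  simp [transferMin, transferMax, hx]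

theorem transfer_apply (D : Set (ℕ × ℕ)) (u v : ℕ × ℕ → ℤ) (x : ℕ × ℕ) :
    (transferMin D u v x = u x ∧ transferMax D u v x = v x) ∨
      (transferMin D u v x = min (u x) (v x) ∧ transferMax D u v x = max (u x) (v x)) := by
  by_cases hx : x ∈ transferRegion D (u ⊓ v) (u ⊔ v)
  · exact .inr (transfer_of_mem_transferRegion hx)
  · exact .inl (transfer_of_notMem_transferRegion hx)

theorem min_transferMin_transferMax :
    min (transferMin D u v x) (transferMax D u v x) = min (u x) (v x) := by
  rcases transfer_apply D u v x with ⟨h₁, h₂⟩ | ⟨h₁, h₂⟩ <;> omega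

theorem max_transferMin_transferMax :
    max (transferMin D u v x) (transferMax D u v x) = max (u x) (v x) := by
  rcases transfer_apply D u v x with ⟨h₁, h₂⟩ | ⟨h₁, h₂⟩ <;> omega

theorem transfer_of_notMem (hx : x ∉ D) :
    transferMin D u v x = min (u x) (v x) ∧ transferMax D u v x = max (u x) (v x) := by
  by_cases huv : u x = v x
  · rcases transfer_apply D u v x with h | h <;> omega
  · have hmem : x ∈ transferRegion D (u ⊓ v) (u ⊔ v) :=
      ⟨x, .refl x, by simp only [Pi.inf_apply, Pi.sup_apply]; omega, hx⟩
    exact transfer_of_mem_transferRegion hmem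

theorem mem_transferRegion_iff_of_conflict {lo hi : ℕ × ℕ → ℤ} (h : Conflict lo hi x y) :
    x ∈ transferRegion D lo hi ↔ y ∈ transferRegion D lo hi :=
  ⟨fun ⟨z, hz, hzD⟩ => ⟨z, .trans _ _ _ (.symm _ _ (.rel _ _ h)) hz, hzD⟩,
    fun ⟨z, hz, hzD⟩ => ⟨z, .trans _ _ _ (.rel _ _ h) hz, hzD⟩⟩

theorem transfer_step (hu : IsSemistandard u) (hv : IsSemistandard v) {δ : ℤ}
    (h : CellStep x y δ) :
    transferMin D u v x + δ ≤ transferMin D u v y ∧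
      transferMax D u v x + δ ≤ transferMax D u v y := by
  set S := transferRegion D (u ⊓ v) (u ⊔ v)
  have hu' := hu h
  have hv' := hv h
  -- a pair split by the region boundary is not in conflict
  have hsplit : ¬ (x ∈ S ↔ y ∈ S) →
      u x = v x ∨ u y = v y ∨ max (u x) (v x) + δ ≤ min (u y) (v y) := by
    intro hS
    by_contra hc
    refine hS (mem_transferRegion_iff_of_conflict ⟨?_, ?_, δ, h, ?_⟩) <;>
      simp only [Pi.inf_apply, Pi.sup_apply] <;> omega
  by_cases hx : x ∈ S <;> by_cases hy : y ∈ S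
  · have := transfer_of_mem_transferRegion hx; have := transfer_of_mem_transferRegion hy; omega
  · have := transfer_of_mem_transferRegion hx; have := transfer_of_notMem_transferRegion hy
    have := hsplit (by tauto); omega
  · have := transfer_of_notMem_transferRegion hx; have := transfer_of_mem_transferRegion hy
    have := hsplit (by tauto); omega
  · have := transfer_of_notMem_transferRegion hx; have := transfer_of_notMem_transferRegion hy
    omega

theorem IsSemistandard.transferMin (hu : IsSemistandard u) (hv : IsSemistandard v) :
    IsSemistandard (transferMin D u v) :=
  fun _ _ _ h => (transfer_step hu hv h).1

theorem IsSemistandard.transferMax (hu : IsSemistandard u) (hv : IsSemistandard v) :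
    IsSemistandard (transferMax D u v) :=
  fun _ _ _ h => (transfer_step hu hv h).2

theorem lt_iff_lt_of_eqvGen (hu : IsSemistandard u) (hv : IsSemistandard v)
    (h : Relation.EqvGen (Conflict (u ⊓ v) (u ⊔ v)) x y) : u x < v x ↔ u y < v y := by
  induction h with
  | rel x y hxy =>
    obtain ⟨hx, hy, δ, hxy, hlt⟩ := hxy
    have := hu hxy
    have := hv hxy
    simp only [Pi.inf_apply, Pi.sup_apply] at hx hy hlt
    omega
  | refl => rfl
  | symm _ _ _ ih => exact ih.symm
  | trans _ _ _ _ _ ih₁ ih₂ => exact ih₁.trans ih₂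

theorem transfer_injective {u' v' : ℕ × ℕ → ℤ} (hu : IsSemistandard u) (hv : IsSemistandard v)
    (hu' : IsSemistandard u') (hv' : IsSemistandard v')
    (hD : ∀ z ∉ D, u z = u' z ∨ v z = v' z)
    (hmin : transferMin D u v = transferMin D u' v')
    (hmax : transferMax D u v = transferMax D u' v') : u = u' ∧ v = v' := by
  have hinf : u ⊓ v = u' ⊓ v' := funext fun x => by
    rw [Pi.inf_apply, Pi.inf_apply, ← min_transferMin_transferMax (D := D), hmin, hmax,
      min_transferMin_transferMax]
  have hsup : u ⊔ v = u' ⊔ v' := funext fun x => by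
    rw [Pi.sup_apply, Pi.sup_apply, ← max_transferMin_transferMax (D := D), hmin, hmax,
      max_transferMin_transferMax]
  have hminmax (x) : min (u x) (v x) = min (u' x) (v' x) ∧ max (u x) (v x) = max (u' x) (v' x) :=
    ⟨congrFun hinf x, congrFun hsup x⟩
  set S := transferRegion D (u ⊓ v) (u ⊔ v) with hS
  have hS' : transferRegion D (u' ⊓ v') (u' ⊔ v') = S := by rw [hS, hinf, hsup]
  -- on `S` the order of `u` and `v` is constant along conflicts, hence fixed by a cell outside `D`
  have hagree : ∀ x ∈ S, u x = u' x ∧ v x = v' x := by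
    rintro x ⟨z, hxz, -, hzD⟩
    have hz : u z < v z ↔ u' z < v' z := by
      have := hminmax z
      rcases hD z hzD with h | h <;> omega
    have hxz' := lt_iff_lt_of_eqvGen hu hv hxz
    have hxz'' := lt_iff_lt_of_eqvGen hu' hv' (hinf ▸ hsup ▸ hxz)
    have := hminmax x
    omega
  have hrest : ∀ x ∉ S, u x = u' x ∧ v x = v' x := by
    intro x hx
    have := transfer_of_notMem_transferRegion hx
    have := transfer_of_notMem_transferRegion (hS' ▸ hx)
    have := congrFun hmin x
    have := congrFun hmax x
    omega
  constructor <;> funext x <;> by_cases hx : x ∈ S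
  exacts [(hagree x hx).1, (hrest x hx).1, (hagree x hx).2, (hrest x hx).2]

theorem content_transferMin_add_content_transferMax (N : ℕ) (T : Finset (ℕ × ℕ)) :
    content N T (transferMin D u v) + content N T (transferMax D u v) =
      content N T u + content N T v := by
  simp only [content, ← sum_add_distrib]
  refine sum_congr rfl fun x _ => ?_
  rcases transfer_apply D u v x with ⟨h₁, h₂⟩ | ⟨h₁, h₂⟩ <;> rw [h₁, h₂]
  rcases le_total (u x) (v x) with h | h
  · rw [min_eq_left h, max_eq_right h]
  · rw [min_eq_right h, max_eq_left h, add_comm]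

end Transfer

section Shapes

variable {N : ℕ} {μ ν α β : YoungDiagram} {u v : ℕ × ℕ → ℤ}

theorem IsPadded.inf (hu : IsPadded N α μ u) (hv : IsPadded N β ν v)
    (hμ : ∀ x ∈ μ, x.1 < N) (hν : ∀ x ∈ ν, x.1 < N) :
    IsPadded N (α ⊔ β) (μ ⊔ ν) (u ⊓ v) where
  of_mem_inner x hx := by
    have := hu.sub_le hμ (x := x)
    have := hv.sub_le hν (x := x)
    simp only [Pi.inf_apply]
    rcases YoungDiagram.mem_sup.1 hx with hx | hx
    · have := hu.of_mem_inner x hx; omega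
    · have := hv.of_mem_inner x hx; omega
  of_mem_skew x hxo hxi := by
    simp only [YoungDiagram.mem_sup, not_or] at hxo hxi
    have := hu.nonneg hxi.1
    have := hv.nonneg hxi.2
    simp only [Pi.inf_apply]
    rcases hxo with hxo | hxo
    · have := hu.lt_of_mem hμ hxo; omega
    · have := hv.lt_of_mem hν hxo; omega
  of_notMem_outer x hxo hxi := by
    simp only [YoungDiagram.mem_sup, not_or] at hxo hxi
    rw [Pi.inf_apply, hu.of_notMem_outer x hxo.1 hxi.1, hv.of_notMem_outer x hxo.2 hxi.2,
      min_self]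

theorem IsPadded.sup (hα : α ≤ μ) (hβ : β ≤ ν) (hu : IsPadded N α μ u)
    (hv : IsPadded N β ν v) (hμ : ∀ x ∈ μ, x.1 < N) (hν : ∀ x ∈ ν, x.1 < N) :
    IsPadded N (α ⊓ β) (μ ⊓ ν) (u ⊔ v) where
  of_mem_inner x hx := by
    rw [YoungDiagram.mem_inf] at hx
    rw [Pi.sup_apply, hu.of_mem_inner x hx.1, hv.of_mem_inner x hx.2, max_self]
  of_mem_skew x hxo hxi := by
    simp only [YoungDiagram.mem_inf, not_and_or] at hxo hxi
    have := hu.lt_of_mem hμ hxo.1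
    have := hv.lt_of_mem hν hxo.2
    simp only [Pi.sup_apply]
    rcases hxi with hxi | hxi
    · have := hu.nonneg hxi; omega
    · have := hv.nonneg hxi; omega
  of_notMem_outer x hxo _ := by
    have := hu.le_add (x := x)
    have := hv.le_add (x := x)
    simp only [Pi.sup_apply]
    rcases not_and_or.1 (YoungDiagram.mem_inf.not.1 hxo) with hxo | hxo
    · have := hu.of_notMem_outer x hxo (fun h => hxo (hα h)); omega
    · have := hv.of_notMem_outer x hxo (fun h => hxo (hβ h)); omega

variable (μ ν α β) in
def skewInter : Set (ℕ × ℕ) := ↑(μ.cells \ α.cells) ∩ ↑(ν.cells \ β.cells)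

theorem mem_skewInter {x : ℕ × ℕ} :
    x ∈ skewInter μ ν α β ↔ (x ∈ μ ∧ x ∉ α) ∧ (x ∈ ν ∧ x ∉ β) := by
  simp [skewInter]

theorem IsPadded.transferMin (hu : IsPadded N α μ u) (hv : IsPadded N β ν v)
    (hμ : ∀ x ∈ μ, x.1 < N) (hν : ∀ x ∈ ν, x.1 < N) :
    IsPadded N (α ⊔ β) (μ ⊔ ν) (transferMin (skewInter μ ν α β) u v) := by
  refine (hu.inf hv hμ hν).of_forall_eq_or fun x => ?_
  by_cases hx : x ∈ skewInter μ ν α β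
  · obtain ⟨⟨hxμ, hxα⟩, hxν, hxβ⟩ := mem_skewInter.1 hx
    refine .inr ⟨YoungDiagram.mem_sup.2 (.inl hxμ), by simp [hxα, hxβ], ?_⟩
    have := hu.of_mem_skew x hxμ hxα
    have := hv.of_mem_skew x hxν hxβ
    rcases transfer_apply (skewInter μ ν α β) u v x with h | h <;> omega
  · exact .inl (transfer_of_notMem hx).1

theorem IsPadded.transferMax (hα : α ≤ μ) (hβ : β ≤ ν) (hu : IsPadded N α μ u)
    (hv : IsPadded N β ν v) (hμ : ∀ x ∈ μ, x.1 < N) (hν : ∀ x ∈ ν, x.1 < N) :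
    IsPadded N (α ⊓ β) (μ ⊓ ν) (transferMax (skewInter μ ν α β) u v) := by
  refine (hu.sup hα hβ hv hμ hν).of_forall_eq_or fun x => ?_
  by_cases hx : x ∈ skewInter μ ν α β
  · obtain ⟨⟨hxμ, hxα⟩, hxν, hxβ⟩ := mem_skewInter.1 hx
    refine .inr ⟨YoungDiagram.mem_inf.2 ⟨hxμ, hxν⟩, by simp [hxα], ?_⟩
    have := hu.of_mem_skew x hxμ hxα
    have := hv.of_mem_skew x hxν hxβ
    rcases transfer_apply (skewInter μ ν α β) u v x with h | h <;> omega
  · exact .inl (transfer_of_notMem hx).2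

theorem transfer_mem_paddedTableaux (hα : α ≤ μ) (hβ : β ≤ ν)
    (hμ : ∀ x ∈ μ, x.1 < N) (hν : ∀ x ∈ ν, x.1 < N)
    (hu : u ∈ paddedTableaux α μ N) (hv : v ∈ paddedTableaux β ν N) :
    transferMin (skewInter μ ν α β) u v ∈ paddedTableaux (α ⊔ β) (μ ⊔ ν) N ∧
      transferMax (skewInter μ ν α β) u v ∈ paddedTableaux (α ⊓ β) (μ ⊓ ν) N := by
  rw [mem_paddedTableaux hμ] at hu
  rw [mem_paddedTableaux hν] at hv
  rw [mem_paddedTableaux fun x hx => (YoungDiagram.mem_sup.1 hx).elim (hμ x) (hν x),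
    mem_paddedTableaux fun x hx => hμ x (YoungDiagram.mem_inf.1 hx).1]
  exact ⟨⟨hu.1.transferMin hv.1, hu.2.transferMin hv.2 hμ hν⟩,
    ⟨hu.1.transferMax hv.1, hu.2.transferMax hα hβ hv.2 hμ hν⟩⟩

theorem transfer_injOn (hμ : ∀ x ∈ μ, x.1 < N) (hν : ∀ x ∈ ν, x.1 < N) :
    Set.InjOn (fun p : (ℕ × ℕ → ℤ) × (ℕ × ℕ → ℤ) =>
        (transferMin (skewInter μ ν α β) p.1 p.2, transferMax (skewInter μ ν α β) p.1 p.2))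
      ↑(paddedTableaux α μ N ×ˢ paddedTableaux β ν N) := by
  rintro ⟨u, v⟩ hp ⟨u', v'⟩ hp' h
  simp only [coe_product, Set.mem_prod, mem_coe, mem_paddedTableaux hμ,
    mem_paddedTableaux hν] at hp hp'
  rw [Prod.mk.injEq] at h ⊢
  refine transfer_injective hp.1.1 hp.2.1 hp'.1.1 hp'.2.1 (fun z hz => ?_) h.1 h.2
  rcases not_and_or.1 hz with hz | hz
  · exact .inl (hp.1.2.eq_of_notMem_skew hp'.1.2 hz)
  · exact .inr (hp.2.2.eq_of_notMem_skew hp'.2.2 hz)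

end Shapes

end SkewSchur

end

open SkewSchur in
/-- **Lam–Pylyavskyy monomial-positivity inequality for skew Schur polynomials.** -/
theorem lam_pylyavskyy_schur (μ ν α β : YoungDiagram) (hα : α ≤ μ) (hβ : β ≤ ν)
    (N : ℕ) (hNμ : μ.colLen 0 ≤ N) (hNν : ν.colLen 0 ≤ N) :
    ∀ d : Fin N →₀ ℕ,
      0 ≤ MvPolynomial.coeff d
        (schurPoly ((μ ⊔ ν).cells \ (α ⊔ β).cells) N *
            schurPoly ((μ ⊓ ν).cells \ (α ⊓ β).cells) N -
          schurPoly (μ.cells \ α.cells) N * schurPoly (ν.cells \ β.cells) N) := by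
  intro d
  have hμ (x) : x ∈ μ → x.1 < N := YoungDiagram.fst_lt_of_colLen_zero_le hNμ
  have hν (x) : x ∈ ν → x.1 < N := YoungDiagram.fst_lt_of_colLen_zero_le hNν
  have hT (x) (hx : x ∈ (μ ⊔ ν).cells) : x.1 < N := (YoungDiagram.mem_sup.1 hx).elim (hμ x) (hν x)
  have hsub {c : YoungDiagram} (h : c ≤ μ ⊔ ν) : c.cells ⊆ (μ ⊔ ν).cells := h
  rw [schurPoly_mul_schurPoly (hsub le_rfl) (hsub inf_le_sup) hT,
    schurPoly_mul_schurPoly (hsub le_sup_left) (hsub le_sup_right) hT]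
  refine coeff_sum_sub_sum_nonneg _ (fun p hp => ?_) (transfer_injOn hμ hν) (fun p _ => ?_)
    (fun _ _ d => ?_) d
  · rw [mem_coe, mem_product] at hp ⊢
    exact transfer_mem_paddedTableaux hα hβ hμ hν hp.1 hp.2
  · rw [content_transferMin_add_content_transferMax]
  · rw [coeff_monomial]
    split_ifs <;> norm_num
end
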